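/- arXiv:2201.08704 — 5 statements merged into one kernel-verified Lean document; each statement's English description precedes it below -/
import Mathlib

section
/- Let n ∈ ℕ, 0 < r ≤ R, α ∈ [0,∞)^n with ∑_j α_j f_j > 0, and f, g ∈ [r,R]^n. Then (1/2)∑_{i=1}^n |α_i f_i / (∑_j α_j f_j) − α_i g_i / (∑_j α_j g_j)| ≤ (R − r)/(R + r). -/
open Finset

lemma kontorovich_key (r R F G a b : ℝ) (hr : 0 < r) (hrR : r ≤ R) (hF : 0 < F) (hG : 0 < G)
    (ha0 : 0 ≤ a) (hb0 : 0 ≤ b) (haF : a ≤ F) (hbG : b ≤ G)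
    (h1 : r * a ≤ R * b) (h2 : r * (G - b) ≤ R * (F - a)) :
    a / F - b / G ≤ (R - r) / (R + r) := by
  have hR : 0 < R := hr.trans_le hrR
  rw [div_sub_div _ _ hF.ne' hG.ne', div_le_div_iff₀ (by positivity) (by positivity)]
  have hP : 0 ≤ (R - r) * (F * G) - (a * G - F * b) * (R + r) := by
    rcases le_or_gt (2 * r * (G - b)) ((R - r) * b) with hc | hc
    · nlinarith [mul_nonneg (sub_nonneg.2 hc) ha0,
        mul_nonneg (mul_nonneg (sub_nonneg.2 hrR) (sub_nonneg.2 haF)) hG.le,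
        mul_nonneg (mul_nonneg (by linarith : (0:ℝ) ≤ R + r) (sub_nonneg.2 haF)) hb0]
    · have hT1 : 0 ≤ (2 * r * (G - b) - (R - r) * b) * (R * b - r * a) :=
        mul_nonneg (by linarith) (by linarith)
      have key : 0 ≤ r * ((R - r) * (F * G) - (a * G - F * b) * (R + r)) := by
        rcases le_or_gt (2 * R * b) ((R - r) * (F - a)) with hc2 | hc2
        · nlinarith [hT1,
            mul_nonneg (mul_nonneg hr.le (sub_nonneg.2 hc2)) (sub_nonneg.2 hbG),
            mul_nonneg (mul_nonneg (sub_nonneg.2 hrR) hR.le) (mul_nonneg hb0 hb0),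
            mul_nonneg (mul_nonneg (mul_nonneg hr.le hR.le) (sub_nonneg.2 haF)) hb0]
        · nlinarith [hT1,
            mul_nonneg (by linarith : (0:ℝ) ≤ 2 * R * b - (R - r) * (F - a))
              (by linarith : (0:ℝ) ≤ R * (F - a) - r * (G - b)),
            mul_nonneg (mul_nonneg hR.le (sub_nonneg.2 hrR)) (sq_nonneg (b - (F - a)))]
      nlinarith [mul_pos hr (by linarith : (0:ℝ) < 1)]
  linarith

/-- Lemma of Kontorovich (2012): half the ℓ1 distance between two normalized weighted
vectors with weights in [r,R] is at most (R-r)/(R+r). -/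
theorem stmt_3 (n : ℕ) (r R : ℝ) (hr : 0 < r) (hrR : r ≤ R)
    (α f g : Fin n → ℝ) (hα : ∀ i, 0 ≤ α i)
    (hαf : 0 < ∑ j : Fin n, α j * f j)
    (hf : ∀ i, f i ∈ Set.Icc r R) (hg : ∀ i, g i ∈ Set.Icc r R) :
    (1 / 2) * ∑ i : Fin n,
        |α i * f i / (∑ j : Fin n, α j * f j) - α i * g i / (∑ j : Fin n, α j * g j)|
      ≤ (R - r) / (R + r) := by
  have hR : 0 < R := hr.trans_le hrR
  set F := ∑ j : Fin n, α j * f j with hFdef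
  set G := ∑ j : Fin n, α j * g j with hGdef
  have hfg : ∀ i, r * (α i * f i) ≤ R * (α i * g i) := by
    intro i
    have h1 := (hf i).2
    have h2 := (hg i).1
    nlinarith [hα i, mul_le_mul_of_nonneg_left h1 (hα i), mul_le_mul_of_nonneg_left h2 (hα i)]
  have hgf : ∀ i, r * (α i * g i) ≤ R * (α i * f i) := by
    intro i
    have h1 := (hg i).2
    have h2 := (hf i).1
    nlinarith [hα i, mul_le_mul_of_nonneg_left h1 (hα i), mul_le_mul_of_nonneg_left h2 (hα i)]
  have hFG : r * F ≤ R * G := by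
    rw [hFdef, hGdef, Finset.mul_sum, Finset.mul_sum]
    exact Finset.sum_le_sum fun i _ => hfg i
  have hG : 0 < G := by nlinarith
  -- the set where the difference is nonnegative
  set d : Fin n → ℝ := fun i => α i * f i / F - α i * g i / G with hd
  set S : Finset (Fin n) := Finset.univ.filter (fun i => 0 ≤ d i) with hS
  have hsum_d : ∑ i : Fin n, d i = 0 := by
    rw [hd]
    rw [Finset.sum_sub_distrib, ← Finset.sum_div, ← Finset.sum_div, ← hFdef, ← hGdef,
      div_self hαf.ne', div_self hG.ne']
    ring
  have hsdf : ∑ i ∈ Finset.univ \ S, (α i * f i) + ∑ i ∈ S, (α i * f i) = F :=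
    Finset.sum_sdiff (Finset.filter_subset _ _)
  have hsdg : ∑ i ∈ Finset.univ \ S, (α i * g i) + ∑ i ∈ S, (α i * g i) = G :=
    Finset.sum_sdiff (Finset.filter_subset _ _)
  have hsplit : ∑ i ∈ S, d i + ∑ i ∈ Finset.univ \ S, d i = 0 := by
    rw [add_comm, Finset.sum_sdiff (Finset.filter_subset _ _)]
    exact hsum_d
  have habs : ∑ i : Fin n, |d i| = 2 * ∑ i ∈ S, d i := by
    have h1 : ∑ i : Fin n, |d i| = ∑ i ∈ S, |d i| + ∑ i ∈ Finset.univ \ S, |d i| := by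
      rw [add_comm, Finset.sum_sdiff (Finset.filter_subset _ _)]
    rw [h1]
    have h2 : ∑ i ∈ S, |d i| = ∑ i ∈ S, d i := by
      apply Finset.sum_congr rfl
      intro i hi
      exact abs_of_nonneg ((Finset.mem_filter.mp hi).2)
    have h3 : ∑ i ∈ Finset.univ \ S, |d i| = -∑ i ∈ Finset.univ \ S, d i := by
      rw [← Finset.sum_neg_distrib]
      apply Finset.sum_congr rfl
      intro i hi
      have := (Finset.mem_sdiff.mp hi).2
      rw [hS, Finset.mem_filter] at this
      push_neg at this
      exact abs_of_neg (this (Finset.mem_univ i))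
    rw [h2, h3]
    linarith
  set a := ∑ i ∈ S, α i * f i with ha
  set b := ∑ i ∈ S, α i * g i with hb
  have hSsum : ∑ i ∈ S, d i = a / F - b / G := by
    rw [hd, Finset.sum_sub_distrib, ← Finset.sum_div, ← Finset.sum_div]
  have hterm_f : ∀ i, 0 ≤ α i * f i := fun i => mul_nonneg (hα i) (hr.le.trans (hf i).1)
  have hterm_g : ∀ i, 0 ≤ α i * g i := fun i => mul_nonneg (hα i) (hr.le.trans (hg i).1)
  have ha0 : 0 ≤ a := Finset.sum_nonneg fun i _ => hterm_f i
  have hb0 : 0 ≤ b := Finset.sum_nonneg fun i _ => hterm_g i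
  have haF : a ≤ F := by
    have : 0 ≤ ∑ i ∈ Finset.univ \ S, α i * f i := Finset.sum_nonneg fun i _ => hterm_f i
    rw [ha]; linarith [hsdf]
  have hbG : b ≤ G := by
    have : 0 ≤ ∑ i ∈ Finset.univ \ S, α i * g i := Finset.sum_nonneg fun i _ => hterm_g i
    rw [hb]; linarith [hsdg]
  have h1 : r * a ≤ R * b := by
    rw [ha, hb, Finset.mul_sum, Finset.mul_sum]
    exact Finset.sum_le_sum fun i _ => hfg i
  have h2 : r * (G - b) ≤ R * (F - a) := by
    have hGb : G - b = ∑ i ∈ Finset.univ \ S, α i * g i := by rw [hb]; linarith [hsdg]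
    have hFa : F - a = ∑ i ∈ Finset.univ \ S, α i * f i := by rw [ha]; linarith [hsdf]
    rw [hGb, hFa, Finset.mul_sum, Finset.mul_sum]
    exact Finset.sum_le_sum fun i _ => hgf i
  have := kontorovich_key r R F G a b hr hrR hαf hG ha0 hb0 haF hbG h1 h2
  calc (1/2) * ∑ i : Fin n, |d i| = ∑ i ∈ S, d i := by rw [habs]; ring
    _ = a / F - b / G := hSsum
    _ ≤ (R - r) / (R + r) := this
end

section
/- Let μ be an undirected Markov chain measure on Ω^n defined by positive pairwise potential functions g_1,…,g_{n−1} (i.e., μ(x) ∝ ∏_{i=1}^{n−1} g_i(x_i, x_{i+1})). Let R = max_i max_{a,b} g_i(a,b) and r = min_i min_{a,b} g_i(a,b). Then for every i ∈ [n] and every pair of boundary configurations u, v ∈ Ω^n, the conditional distributions of coordinate i satisfy TV(μ_i(·|u^{-i}), μ_i(·|v^{-i})) ≤ (R² − r²)/(R² + r²). -/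
open Finset

noncomputable section

/-- Conditional distribution of coordinate `i` given the other coordinates equal `x^{-i}`. -/
def condCoord {X : Type*} [Fintype X] [DecidableEq X] {n : ℕ}
    (μ : (Fin n → X) → ℝ) (i : Fin n) (x : Fin n → X) (a : X) : ℝ :=
  μ (Function.update x i a) / ∑ b : X, μ (Function.update x i b)

/-- Total variation distance between two distributions on a finite space. -/
def tv {X : Type*} [Fintype X] (p q : X → ℝ) : ℝ :=
  (1 / 2) * ∑ a : X, |p a - q a|

/-- The undirected Markov chain measure on Ω^{n+1} given by pairwise potentials. -/
def chainMeasure {Ω : Type*} [Fintype Ω] {n : ℕ} (g : Fin n → Ω → Ω → ℝ)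
    (x : Fin (n + 1) → Ω) : ℝ :=
  (∏ i : Fin n, g i (x i.castSucc) (x i.succ)) /
    ∑ y : Fin (n + 1) → Ω, ∏ i : Fin n, g i (y i.castSucc) (y i.succ)

set_option maxHeartbeats 1000000

/-- Key lemma: distributions proportional to weights in [m,M] are within (M-m)/(M+m) in TV. -/
lemma tv_weights {X : Type*} [Fintype X] [Nonempty X] (w w' : X → ℝ) (m M : ℝ)
    (hm : 0 < m) (hmM : m ≤ M)
    (hw : ∀ a, w a ∈ Set.Icc m M) (hw' : ∀ a, w' a ∈ Set.Icc m M) :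
    (1 / 2) * ∑ a : X, |w a / (∑ b, w b) - w' a / (∑ b, w' b)| ≤ (M - m) / (M + m) := by
  have hM : 0 < M := hm.trans_le hmM
  have hWpos : 0 < ∑ b, w b :=
    Finset.sum_pos (fun a _ => hm.trans_le (hw a).1) univ_nonempty
  have hW'pos : 0 < ∑ b, w' b :=
    Finset.sum_pos (fun a _ => hm.trans_le (hw' a).1) univ_nonempty
  set W := ∑ b, w b with hW
  set W' := ∑ b, w' b with hW'
  set p : X → ℝ := fun a => w a / W with hp
  set q : X → ℝ := fun a => w' a / W' with hq
  set A : Finset X := univ.filter (fun a => q a ≤ p a) with hA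
  set B : Finset X := univ.filter (fun a => ¬ q a ≤ p a) with hB
  have hsump : ∑ a, p a = 1 := by
    rw [hp]; rw [← Finset.sum_div]; exact div_self hWpos.ne'
  have hsumq : ∑ a, q a = 1 := by
    rw [hq]; rw [← Finset.sum_div]; exact div_self hW'pos.ne'
  have hzero : ∑ a, (p a - q a) = 0 := by
    rw [Finset.sum_sub_distrib, hsump, hsumq]; ring
  have hsplit : ∑ a ∈ A, (p a - q a) + ∑ a ∈ B, (p a - q a) = 0 := by
    rw [hA, hB, Finset.sum_filter_add_sum_filter_not]; exact hzero
  have habs : ∑ a : X, |p a - q a| = 2 * ∑ a ∈ A, (p a - q a) := by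
    have h1 : ∑ a ∈ A, |p a - q a| = ∑ a ∈ A, (p a - q a) := by
      apply Finset.sum_congr rfl
      intro a ha
      rw [hA, Finset.mem_filter] at ha
      exact abs_of_nonneg (sub_nonneg.2 ha.2)
    have h2 : ∑ a ∈ B, |p a - q a| = ∑ a ∈ B, -(p a - q a) := by
      apply Finset.sum_congr rfl
      intro a ha
      rw [hB, Finset.mem_filter] at ha
      exact abs_of_neg (sub_neg.2 (lt_of_not_ge ha.2))
    have h3 : ∑ a : X, |p a - q a| = ∑ a ∈ A, |p a - q a| + ∑ a ∈ B, |p a - q a| := by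
      rw [hA, hB, Finset.sum_filter_add_sum_filter_not]
    rw [h3, h1, h2, Finset.sum_neg_distrib]
    linarith
  rw [habs]
  -- now bound ∑_A (p - q)
  set S := ∑ a ∈ A, w a with hS
  set T := ∑ a ∈ B, w a with hT
  set S' := ∑ a ∈ A, w' a with hS'
  set T' := ∑ a ∈ B, w' a with hT'
  have hSTW : S + T = W := by rw [hS, hT, hA, hB, Finset.sum_filter_add_sum_filter_not]
  have hSTW' : S' + T' = W' := by rw [hS', hT', hA, hB, Finset.sum_filter_add_sum_filter_not]
  set j : ℝ := (A.card : ℝ) with hj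
  set l : ℝ := (B.card : ℝ) with hl
  have hjnn : 0 ≤ j := Nat.cast_nonneg _
  have hlnn : 0 ≤ l := Nat.cast_nonneg _
  have hjl : 0 < j + l := by
    have : A.card + B.card = Fintype.card X := by
      rw [hA, hB]; exact Finset.card_filter_add_card_filter_not _
    have hk : 0 < Fintype.card X := Fintype.card_pos
    rw [hj, hl, ← Nat.cast_add, this]
    exact_mod_cast hk
  have hSub : S ≤ M * j := by
    have := Finset.sum_le_sum (fun a (_ : a ∈ A) => (hw a).2)
    rw [Finset.sum_const, nsmul_eq_mul] at this
    rw [hS]; rw [hj]; linarith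
  have hSlb : m * j ≤ S := by
    have := Finset.sum_le_sum (fun a (_ : a ∈ A) => (hw a).1)
    rw [Finset.sum_const, nsmul_eq_mul] at this
    rw [hS]; rw [hj]; linarith
  have hTub : T ≤ M * l := by
    have := Finset.sum_le_sum (fun a (_ : a ∈ B) => (hw a).2)
    rw [Finset.sum_const, nsmul_eq_mul] at this
    rw [hT]; rw [hl]; linarith
  have hTlb : m * l ≤ T := by
    have := Finset.sum_le_sum (fun a (_ : a ∈ B) => (hw a).1)
    rw [Finset.sum_const, nsmul_eq_mul] at this
    rw [hT]; rw [hl]; linarith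
  have hS'ub : S' ≤ M * j := by
    have := Finset.sum_le_sum (fun a (_ : a ∈ A) => (hw' a).2)
    rw [Finset.sum_const, nsmul_eq_mul] at this
    rw [hS']; rw [hj]; linarith
  have hS'lb : m * j ≤ S' := by
    have := Finset.sum_le_sum (fun a (_ : a ∈ A) => (hw' a).1)
    rw [Finset.sum_const, nsmul_eq_mul] at this
    rw [hS']; rw [hj]; linarith
  have hT'ub : T' ≤ M * l := by
    have := Finset.sum_le_sum (fun a (_ : a ∈ B) => (hw' a).2)
    rw [Finset.sum_const, nsmul_eq_mul] at this
    rw [hT']; rw [hl]; linarith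
  have hT'lb : m * l ≤ T' := by
    have := Finset.sum_le_sum (fun a (_ : a ∈ B) => (hw' a).1)
    rw [Finset.sum_const, nsmul_eq_mul] at this
    rw [hT']; rw [hl]; linarith
  have hSnn : 0 ≤ S := le_trans (by positivity) hSlb
  have hS'nn : 0 ≤ S' := le_trans (by positivity) hS'lb
  have hTnn : 0 ≤ T := le_trans (by positivity) hTlb
  have hT'nn : 0 ≤ T' := le_trans (by positivity) hT'lb
  have hsumApq : ∑ a ∈ A, (p a - q a) = S / W - S' / W' := by
    rw [Finset.sum_sub_distrib, hp, hq, ← Finset.sum_div, ← Finset.sum_div]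
  rw [hsumApq]
  have hD1 : 0 < M * j + m * l := by nlinarith
  have hD2 : 0 < m * j + M * l := by nlinarith
  have key1 : S / W ≤ (M * j) / (M * j + m * l) := by
    rw [div_le_div_iff₀ hWpos hD1, ← hSTW]
    nlinarith [mul_le_mul hSub hTlb (by positivity) (by positivity)]
  have key2 : (m * j) / (m * j + M * l) ≤ S' / W' := by
    rw [div_le_div_iff₀ hD2 hW'pos, ← hSTW']
    nlinarith [mul_le_mul hT'ub hS'lb (by positivity) (by positivity)]
  have key3 : (M * j) / (M * j + m * l) - (m * j) / (m * j + M * l) ≤ (M - m) / (M + m) := by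
    rw [div_sub_div _ _ hD1.ne' hD2.ne', div_le_div_iff₀ (mul_pos hD1 hD2) (by linarith)]
    nlinarith [mul_nonneg (mul_nonneg (sub_nonneg.2 hmM) (mul_pos hM hm).le) (sq_nonneg (j - l))]
  linarith

/-- For an undirected Markov chain with potentials in [r,R], the conditional
distributions of any coordinate given any two boundary configurations are within
(R²−r²)/(R²+r²) in total variation. -/
theorem stmt_4 {Ω : Type*} [Fintype Ω] [DecidableEq Ω] [Nonempty Ω] {n : ℕ}
    (g : Fin n → Ω → Ω → ℝ) (r R : ℝ) (hr : 0 < r) (hrR : r ≤ R)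
    (hg : ∀ i a b, g i a b ∈ Set.Icc r R)
    (i : Fin (n + 1)) (u v : Fin (n + 1) → Ω) :
    tv (condCoord (chainMeasure g) i u) (condCoord (chainMeasure g) i v)
      ≤ (R ^ 2 - r ^ 2) / (R ^ 2 + r ^ 2) := by
  classical
  have hR : 0 < R := hr.trans_le hrR
  set P : (Fin (n + 1) → Ω) → ℝ :=
    fun x => ∏ j : Fin n, g j (x j.castSucc) (x j.succ) with hPdef
  have hPpos : ∀ x, 0 < P x :=
    fun x => Finset.prod_pos (fun j _ => hr.trans_le (hg _ _ _).1)
  have hZ : 0 < ∑ y, P y := Finset.sum_pos (fun y _ => hPpos y) univ_nonempty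
  set E : Finset (Fin n) := univ.filter (fun j => j.castSucc = i ∨ j.succ = i) with hE
  set h : (Fin (n + 1) → Ω) → Ω → ℝ :=
    fun x a => ∏ j ∈ E, g j (Function.update x i a j.castSucc)
      (Function.update x i a j.succ) with hhdef
  have hhpos : ∀ x a, 0 < h x a :=
    fun x a => Finset.prod_pos (fun j _ => hr.trans_le (hg _ _ _).1)
  -- factorization
  have hfact : ∀ (x : Fin (n + 1) → Ω) (a : Ω), P (Function.update x i a) =
      h x a * ∏ j ∈ univ.filter (fun j : Fin n => ¬(j.castSucc = i ∨ j.succ = i)),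
        g j (x j.castSucc) (x j.succ) := by
    intro x a
    have e1 : P (Function.update x i a) =
        h x a * ∏ j ∈ univ.filter (fun j : Fin n => ¬(j.castSucc = i ∨ j.succ = i)),
          g j (Function.update x i a j.castSucc) (Function.update x i a j.succ) := by
      simp only [hPdef, hhdef, hE]
      exact (Finset.prod_filter_mul_prod_filter_not univ _ _).symm
    rw [e1]
    congr 1
    apply Finset.prod_congr rfl
    intro j hj
    rw [Finset.mem_filter] at hj
    push_neg at hj
    rw [Function.update_of_ne hj.2.1, Function.update_of_ne hj.2.2]
  -- conditional distribution in weight form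
  have hcond : ∀ x : Fin (n + 1) → Ω,
      condCoord (chainMeasure g) i x = fun a => h x a / ∑ b, h x b := by
    intro x
    funext a
    have hC : 0 < ∏ j ∈ univ.filter (fun j : Fin n => ¬(j.castSucc = i ∨ j.succ = i)),
        g j (x j.castSucc) (x j.succ) :=
      Finset.prod_pos (fun j _ => hr.trans_le (hg _ _ _).1)
    have hchain : ∀ y, chainMeasure g y = P y / (∑ z, P z) := fun y => rfl
    unfold condCoord
    simp only [hchain]
    rw [← Finset.sum_div, div_div_div_cancel_right₀ hZ.ne']
    simp only [hfact]
    rw [← Finset.sum_mul, mul_div_mul_right _ _ hC.ne']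
  -- bounds on h
  have hbound : ∀ (x : Fin (n + 1) → Ω) (a : Ω),
      h x a ∈ Set.Icc (r ^ E.card) (R ^ E.card) := by
    intro x a
    constructor
    · calc r ^ E.card = ∏ _j ∈ E, r := (Finset.prod_const r).symm
        _ ≤ h x a := Finset.prod_le_prod (fun j _ => hr.le) (fun j _ => (hg _ _ _).1)
    · calc h x a ≤ ∏ _j ∈ E, R :=
          Finset.prod_le_prod (fun j _ => (hr.trans_le (hg _ _ _).1).le)
            (fun j _ => (hg _ _ _).2)
        _ = R ^ E.card := Finset.prod_const R
  have hcard : E.card ≤ 2 := by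
    have hsub : E ⊆ univ.filter (fun j : Fin n => j.castSucc = i) ∪
        univ.filter (fun j : Fin n => j.succ = i) := by
      intro j hj
      rw [hE, Finset.mem_filter] at hj
      rcases hj.2 with h1 | h1
      · exact Finset.mem_union_left _ (Finset.mem_filter.2 ⟨Finset.mem_univ _, h1⟩)
      · exact Finset.mem_union_right _ (Finset.mem_filter.2 ⟨Finset.mem_univ _, h1⟩)
    have h1 : (univ.filter (fun j : Fin n => j.castSucc = i)).card ≤ 1 := by
      apply Finset.card_le_one.2
      intro a ha b hb
      rw [Finset.mem_filter] at ha hb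
      exact Fin.castSucc_injective n (ha.2.trans hb.2.symm)
    have h2 : (univ.filter (fun j : Fin n => j.succ = i)).card ≤ 1 := by
      apply Finset.card_le_one.2
      intro a ha b hb
      rw [Finset.mem_filter] at ha hb
      exact Fin.succ_injective n (ha.2.trans hb.2.symm)
    calc E.card ≤ _ := Finset.card_le_card hsub
      _ ≤ _ := Finset.card_union_le _ _
      _ ≤ 2 := by omega
  rw [hcond u, hcond v]
  have main := tv_weights (h u) (h v) (r ^ E.card) (R ^ E.card)
    (pow_pos hr _) (pow_le_pow_left₀ hr.le hrR _) (hbound u) (hbound v)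
  refine le_trans ?_ (le_trans main ?_)
  · exact le_of_eq rfl
  · -- (R^c - r^c)/(R^c + r^c) ≤ (R^2 - r^2)/(R^2 + r^2) for c ≤ 2
    set c := E.card with hc
    interval_cases c
    · simp only [pow_zero]
      norm_num
      exact div_nonneg (by nlinarith) (by positivity)
    · simp only [pow_one]
      rw [div_le_div_iff₀ (by linarith) (by positivity)]
      nlinarith [mul_nonneg (sub_nonneg.2 hrR) (mul_pos hR hr).le]
    · exact le_refl _
end
end

section
/- Let μ be an undirected Markov chain measure on Ω^n with positive potentials, with R and r its maximal and minimal potential values. Then the Gibbs dependence coefficient satisfies ψ(μ) ≤ (R² − r²)/(R² + r²). -/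
open Finset

noncomputable section

/-- The `i`-th marginal of a measure on a finite product space. -/
def marg {X : Type*} [Fintype X] [DecidableEq X] {n : ℕ}
    (μ : (Fin n → X) → ℝ) (i : Fin n) (a : X) : ℝ :=
  ∑ x : Fin n → X, if x i = a then μ x else 0

lemma tv_eq_pos_part {X : Type*} [Fintype X] (p q : X → ℝ)
    (h : ∑ a, p a = ∑ a, q a) :
    tv p q = ∑ a ∈ univ.filter (fun a => q a < p a), (p a - q a) := by
  classical
  unfold tv
  have hsplit := Finset.sum_filter_add_sum_filter_not univ (fun a => q a < p a)
      (fun a => |p a - q a|)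
  have h1 : ∑ a ∈ univ.filter (fun a => q a < p a), |p a - q a|
      = ∑ a ∈ univ.filter (fun a => q a < p a), (p a - q a) :=
    Finset.sum_congr rfl fun a ha => abs_of_pos (by
      simp only [mem_filter] at ha; linarith [ha.2])
  have h2 : ∑ a ∈ univ.filter (fun a => ¬ q a < p a), |p a - q a|
      = ∑ a ∈ univ.filter (fun a => ¬ q a < p a), (q a - p a) :=
    Finset.sum_congr rfl fun a ha => by
      simp only [mem_filter, not_lt] at ha
      rw [abs_sub_comm]; exact abs_of_nonneg (by linarith [ha.2])
  have h3 : (∑ a ∈ univ.filter (fun a => q a < p a), (p a - q a))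
      + ∑ a ∈ univ.filter (fun a => ¬ q a < p a), (p a - q a) = 0 := by
    rw [Finset.sum_filter_add_sum_filter_not]
    rw [Finset.sum_sub_distrib, h, sub_self]
  have h5 : ∑ a ∈ univ.filter (fun a => ¬ q a < p a), (q a - p a)
      = - ∑ a ∈ univ.filter (fun a => ¬ q a < p a), (p a - q a) := by
    rw [← Finset.sum_neg_distrib]
    exact Finset.sum_congr rfl fun a _ => (neg_sub (p a) (q a)).symm
  have h4 : ∑ a ∈ univ.filter (fun a => ¬ q a < p a), (q a - p a)
      = ∑ a ∈ univ.filter (fun a => q a < p a), (p a - q a) := by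
    rw [h5]; linarith
  rw [← hsplit, h1, h2, h4]; ring

lemma frac_bound {m M a1 a2 b1 b2 : ℝ} (hm : 0 < m) (hmM : m ≤ M)
    (ha1n : 0 ≤ a1) (ha2n : 0 ≤ a2) (hb1n : 0 ≤ b1) (hb2n : 0 ≤ b2)
    (hUp : 0 < a1 + a2) (hVp : 0 < b1 + b2)
    (c1 : m * a1 ≤ M * b1) (c2 : m * b2 ≤ M * a2) :
    a1 / (a1 + a2) - b1 / (b1 + b2) ≤ (M - m) / (M + m) := by
  have hM : 0 < M := hm.trans_le hmM
  have hDp : 0 < M ^ 2 * b1 + m ^ 2 * b2 := by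
    have h0 : 0 < m ^ 2 * (b1 + b2) := by positivity
    nlinarith [mul_le_mul_of_nonneg_right (by nlinarith : m ^ 2 ≤ M ^ 2) hb1n]
  have step1 : a1 / (a1 + a2) ≤ M ^ 2 * b1 / (M ^ 2 * b1 + m ^ 2 * b2) := by
    rw [div_le_div_iff₀ hUp hDp]
    nlinarith [mul_le_mul c1 c2 (by positivity) (by positivity : (0:ℝ) ≤ M * b1)]
  have step2 : M ^ 2 * b1 / (M ^ 2 * b1 + m ^ 2 * b2) - b1 / (b1 + b2) ≤ (M - m) / (M + m) := by
    rw [div_sub_div _ _ hDp.ne' hVp.ne', div_le_div_iff₀ (by positivity) (by positivity)]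
    have hid : (M - m) * ((M ^ 2 * b1 + m ^ 2 * b2) * (b1 + b2))
        - (M ^ 2 * b1 * (b1 + b2) - b1 * (M ^ 2 * b1 + m ^ 2 * b2)) * (M + m)
        = (M - m) * (M * b1 - m * b2) ^ 2 := by ring
    have hsq : 0 ≤ (M - m) * (M * b1 - m * b2) ^ 2 :=
      mul_nonneg (sub_nonneg.2 hmM) (sq_nonneg _)
    linarith
  linarith

lemma tv_norm_le {X : Type*} [Fintype X] [Nonempty X] {m M : ℝ} (hm : 0 < m) (hmM : m ≤ M)
    (u v : X → ℝ) (hu : ∀ a, u a ∈ Set.Icc m M) (hv : ∀ a, v a ∈ Set.Icc m M) :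
    tv (fun a => u a / ∑ b, u b) (fun a => v a / ∑ b, v b) ≤ (M - m) / (M + m) := by
  classical
  have hM : 0 < M := hm.trans_le hmM
  have hU : 0 < ∑ b, u b :=
    Finset.sum_pos (fun b _ => hm.trans_le (hu b).1) univ_nonempty
  have hV : 0 < ∑ b, v b :=
    Finset.sum_pos (fun b _ => hm.trans_le (hv b).1) univ_nonempty
  set p : X → ℝ := fun a => u a / ∑ b, u b with hp
  set q : X → ℝ := fun a => v a / ∑ b, v b with hq
  have hsum : ∑ a, p a = ∑ a, q a := by
    simp only [hp, hq, ← Finset.sum_div, div_self hU.ne', div_self hV.ne']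
  rw [tv_eq_pos_part _ _ hsum]
  set A := univ.filter (fun a => q a < p a) with hA
  set a1 := ∑ a ∈ A, u a with ha1
  set a2 := ∑ a ∈ Aᶜ, u a with ha2
  set b1 := ∑ a ∈ A, v a with hb1
  set b2 := ∑ a ∈ Aᶜ, v a with hb2
  have hUsplit : ∑ b, u b = a1 + a2 := by
    rw [ha1, ha2, Finset.sum_add_sum_compl]
  have hVsplit : ∑ b, v b = b1 + b2 := by
    rw [hb1, hb2, Finset.sum_add_sum_compl]
  have key : ∑ a ∈ A, (p a - q a) = a1 / (a1 + a2) - b1 / (b1 + b2) := by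
    rw [Finset.sum_sub_distrib]
    simp only [hp, hq, ← Finset.sum_div, hUsplit, hVsplit]
    rfl
  rw [key]
  have ha1n : 0 ≤ a1 := Finset.sum_nonneg fun a _ => (hm.trans_le (hu a).1).le
  have ha2n : 0 ≤ a2 := Finset.sum_nonneg fun a _ => (hm.trans_le (hu a).1).le
  have hb1n : 0 ≤ b1 := Finset.sum_nonneg fun a _ => (hm.trans_le (hv a).1).le
  have hb2n : 0 ≤ b2 := Finset.sum_nonneg fun a _ => (hm.trans_le (hv a).1).le
  have hUp : 0 < a1 + a2 := by rw [← hUsplit]; exact hU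
  have hVp : 0 < b1 + b2 := by rw [← hVsplit]; exact hV
  have hM : 0 < M := hm.trans_le hmM
  have c1 : m * a1 ≤ M * b1 := by
    calc m * a1 = ∑ a ∈ A, m * u a := by rw [Finset.mul_sum]
    _ ≤ ∑ a ∈ A, M * v a := Finset.sum_le_sum fun a _ => by
      nlinarith [(hu a).1, (hu a).2, (hv a).1, (hv a).2]
    _ = M * b1 := by rw [Finset.mul_sum]
  have c2 : m * b2 ≤ M * a2 := by
    calc m * b2 = ∑ a ∈ Aᶜ, m * v a := by rw [Finset.mul_sum]
    _ ≤ ∑ a ∈ Aᶜ, M * u a := Finset.sum_le_sum fun a _ => by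
      nlinarith [(hu a).1, (hu a).2, (hv a).1, (hv a).2]
    _ = M * a2 := by rw [Finset.mul_sum]
  exact frac_bound hm hmM ha1n ha2n hb1n hb2n hUp hVp c1 c2

lemma frac_mono {m M m' M' : ℝ} (hm : 0 < m) (hmM : m ≤ M) (hm' : 0 < m') (hmM' : m' ≤ M')
    (h : M * m' ≤ M' * m) : (M - m) / (M + m) ≤ (M' - m') / (M' + m') := by
  rw [div_le_div_iff₀ (by linarith) (by linarith)]
  nlinarith

lemma tv_mix_le {X I : Type*} [Fintype X] [Fintype I] (w : I → ℝ) (q : I → X → ℝ)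
    (p : X → ℝ) (hw : ∀ i, 0 ≤ w i) (hsum : ∑ i, w i = 1) :
    tv (fun a => ∑ i, w i * q i a) p ≤ ∑ i, w i * tv (q i) p := by
  unfold tv
  have key : ∀ a, |(∑ i, w i * q i a) - p a| ≤ ∑ i, w i * |q i a - p a| := by
    intro a
    have h1 : (∑ i, w i * q i a) - p a = ∑ i, w i * (q i a - p a) := by
      simp only [mul_sub, Finset.sum_sub_distrib, ← Finset.sum_mul, hsum, one_mul]
    rw [h1]
    calc |∑ i, w i * (q i a - p a)| ≤ ∑ i, |w i * (q i a - p a)| :=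
      Finset.abs_sum_le_sum_abs _ _
    _ = ∑ i, w i * |q i a - p a| := Finset.sum_congr rfl fun i _ => by
      rw [abs_mul, abs_of_nonneg (hw i)]
  calc (1 / 2) * ∑ a, |(∑ i, w i * q i a) - p a|
      ≤ (1 / 2) * ∑ a, ∑ i, w i * |q i a - p a| := by
        have := Finset.sum_le_sum (fun a (_ : a ∈ (univ : Finset X)) => key a)
        linarith
    _ = ∑ i, w i * ((1 / 2) * ∑ a, |q i a - p a|) := by
        rw [Finset.sum_comm, Finset.mul_sum]
        exact Finset.sum_congr rfl fun i _ => by rw [Finset.mul_sum, Finset.mul_sum, Finset.mul_sum]; exact Finset.sum_congr rfl fun a _ => by ring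
    _ = ∑ i, w i * tv (q i) p := rfl

section helpers

variable {Ω : Type*} [Fintype Ω] [DecidableEq Ω] [Nonempty Ω] {n : ℕ}
  (g : Fin n → Ω → Ω → ℝ) {r R : ℝ}

lemma prod_pot_pos (hr : 0 < r) (hg : ∀ i a b, g i a b ∈ Set.Icc r R)
    (x : Fin (n + 1) → Ω) : 0 < ∏ i : Fin n, g i (x i.castSucc) (x i.succ) :=
  Finset.prod_pos fun i _ => hr.trans_le (hg i _ _).1

lemma sum_pot_pos (hr : 0 < r) (hg : ∀ i a b, g i a b ∈ Set.Icc r R) :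
    0 < ∑ y : Fin (n + 1) → Ω, ∏ i : Fin n, g i (y i.castSucc) (y i.succ) :=
  Finset.sum_pos (fun y _ => prod_pot_pos g hr hg y) univ_nonempty

lemma chainMeasure_pos (hr : 0 < r) (hg : ∀ i a b, g i a b ∈ Set.Icc r R)
    (x : Fin (n + 1) → Ω) : 0 < chainMeasure g x :=
  div_pos (prod_pot_pos g hr hg x) (sum_pot_pos g hr hg)

lemma chainMeasure_sum (hr : 0 < r) (hg : ∀ i a b, g i a b ∈ Set.Icc r R) :
    ∑ x : Fin (n + 1) → Ω, chainMeasure g x = 1 := by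
  unfold chainMeasure
  rw [← Finset.sum_div, div_self (sum_pot_pos g hr hg).ne']

/-- The set of potential indices touching coordinate `i`. -/
def touch (n : ℕ) (i : Fin (n + 1)) : Finset (Fin n) :=
  univ.filter (fun j : Fin n => j.castSucc = i ∨ j.succ = i)

lemma touch_card_le (i : Fin (n + 1)) : (touch n i).card ≤ 2 := by
  have h1 : (univ.filter (fun j : Fin n => j.castSucc = i)).card ≤ 1 :=
    Finset.card_le_one.2 fun a ha b hb => by
      simp only [mem_filter] at ha hb
      exact Fin.castSucc_injective _ (ha.2.trans hb.2.symm)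
  have h2 : (univ.filter (fun j : Fin n => j.succ = i)).card ≤ 1 :=
    Finset.card_le_one.2 fun a ha b hb => by
      simp only [mem_filter] at ha hb
      exact Fin.succ_injective _ (ha.2.trans hb.2.symm)
  calc (touch n i).card
      = ((univ.filter (fun j : Fin n => j.castSucc = i)) ∪
          (univ.filter (fun j : Fin n => j.succ = i))).card := by
        rw [touch, Finset.filter_or]
    _ ≤ _ := (Finset.card_union_le _ _).trans (by omega)

/-- The local weight of coordinate `i` being `a`, given `x` off `i`. -/
def locw (g : Fin n → Ω → Ω → ℝ) (i : Fin (n + 1)) (x : Fin (n + 1) → Ω) (a : Ω) : ℝ :=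
  ∏ j ∈ touch n i, g j (Function.update x i a j.castSucc) (Function.update x i a j.succ)

lemma locw_mem (hr : 0 < r) (hg : ∀ i a b, g i a b ∈ Set.Icc r R)
    (i : Fin (n + 1)) (x : Fin (n + 1) → Ω) (a : Ω) :
    locw g i x a ∈ Set.Icc (r ^ (touch n i).card) (R ^ (touch n i).card) := by
  constructor
  · rw [← Finset.prod_const]
    exact Finset.prod_le_prod (fun j _ => hr.le) (fun j _ => (hg j _ _).1)
  · rw [← Finset.prod_const]
    exact Finset.prod_le_prod (fun j _ => (hr.trans_le (hg j _ _).1).le)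
      (fun j _ => (hg j _ _).2)

lemma weight_factor (i : Fin (n + 1)) (x : Fin (n + 1) → Ω) (a : Ω) :
    (∏ j : Fin n, g j (Function.update x i a j.castSucc) (Function.update x i a j.succ))
      = locw g i x a *
        ∏ j ∈ univ.filter (fun j : Fin n => ¬(j.castSucc = i ∨ j.succ = i)),
          g j (x j.castSucc) (x j.succ) := by
  rw [← Finset.prod_filter_mul_prod_filter_not univ
    (fun j : Fin n => j.castSucc = i ∨ j.succ = i)]
  congr 1
  refine Finset.prod_congr rfl fun j hj => ?_
  simp only [mem_filter] at hj
  push_neg at hj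
  rw [Function.update_of_ne hj.2.1, Function.update_of_ne hj.2.2]

lemma cond_eq (hr : 0 < r) (hg : ∀ i a b, g i a b ∈ Set.Icc r R)
    (i : Fin (n + 1)) (x : Fin (n + 1) → Ω) :
    condCoord (chainMeasure g) i x = fun a => locw g i x a / ∑ b, locw g i x b := by
  funext a
  have hZ := (sum_pot_pos g hr hg).ne'
  have hc : 0 < ∏ j ∈ univ.filter (fun j : Fin n => ¬(j.castSucc = i ∨ j.succ = i)),
      g j (x j.castSucc) (x j.succ) :=
    Finset.prod_pos fun j _ => hr.trans_le (hg j _ _).1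
  have hl : 0 < ∑ b, locw g i x b :=
    Finset.sum_pos (fun b _ => (pow_pos hr _).trans_le (locw_mem g hr hg i x b).1)
      univ_nonempty
  unfold condCoord chainMeasure
  simp only [weight_factor g i x]
  rw [← Finset.sum_div, ← Finset.sum_mul]
  have key : ∀ A S c Z : ℝ, c ≠ 0 → Z ≠ 0 → S ≠ 0 →
      (A * c / Z) / ((S * c) / Z) = A / S := by
    intros A S c Z h1 h2 h3; field_simp
  exact key _ _ _ _ hc.ne' hZ hl.ne'

lemma marg_mix (hr : 0 < r) (hg : ∀ i a b, g i a b ∈ Set.Icc r R)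
    (i : Fin (n + 1)) (a : Ω) :
    marg (chainMeasure g) i a
      = ∑ x : Fin (n + 1) → Ω, chainMeasure g x * condCoord (chainMeasure g) i x a := by
  classical
  set μ := chainMeasure g with hμ
  set e := Equiv.funSplitAt i Ω with he
  have e1 : ∀ (b : Ω) (z : {j : Fin (n+1) // j ≠ i} → Ω), (e.symm (b, z)) i = b := by
    intro b z
    simp [he, Equiv.funSplitAt, Equiv.piSplitAt]
  have e2 : ∀ (b : Ω) (z : {j : Fin (n+1) // j ≠ i} → Ω) (c : Ω),
      Function.update (e.symm (b, z)) i c = e.symm (c, z) := by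
    intro b z c
    funext j
    by_cases hj : j = i
    · subst hj; rw [Function.update_self, e1]
    · rw [Function.update_of_ne hj]
      simp [he, Equiv.funSplitAt, Equiv.piSplitAt, hj]
  have hSpos : ∀ z : {j : Fin (n+1) // j ≠ i} → Ω, 0 < ∑ c, μ (e.symm (c, z)) :=
    fun z => Finset.sum_pos (fun c _ => chainMeasure_pos g hr hg _) univ_nonempty
  have lhs : marg μ i a = ∑ z : {j : Fin (n+1) // j ≠ i} → Ω, μ (e.symm (a, z)) := by
    unfold marg
    rw [← Equiv.sum_comp e.symm (fun x => if x i = a then μ x else 0)]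
    rw [Fintype.sum_prod_type]
    rw [Finset.sum_comm]
    refine Finset.sum_congr rfl fun z _ => ?_
    simp only [e1]
    rw [Finset.sum_ite_eq' univ a (fun b => μ (e.symm (b, z))), if_pos (mem_univ a)]
  have rhs : ∑ x : Fin (n + 1) → Ω, μ x * condCoord μ i x a
      = ∑ z : {j : Fin (n+1) // j ≠ i} → Ω, μ (e.symm (a, z)) := by
    rw [← Equiv.sum_comp e.symm (fun x => μ x * condCoord μ i x a)]
    rw [Fintype.sum_prod_type]
    rw [Finset.sum_comm]
    refine Finset.sum_congr rfl fun z _ => ?_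
    have hcond : ∀ b : Ω, condCoord μ i (e.symm (b, z)) a
        = μ (e.symm (a, z)) / ∑ c, μ (e.symm (c, z)) := by
      intro b
      unfold condCoord
      rw [e2]
      congr 1
      exact Finset.sum_congr rfl fun c _ => by rw [e2]
    simp only [hcond]
    rw [← Finset.sum_mul, mul_div_cancel₀]
    exact (hSpos z).ne'
  rw [lhs, rhs]

lemma tv_cond_le (hr : 0 < r) (hrR : r ≤ R) (hg : ∀ i a b, g i a b ∈ Set.Icc r R)
    (i : Fin (n + 1)) (x y : Fin (n + 1) → Ω) :
    tv (condCoord (chainMeasure g) i x) (condCoord (chainMeasure g) i y)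
      ≤ (R ^ 2 - r ^ 2) / (R ^ 2 + r ^ 2) := by
  rw [cond_eq g hr hg i x, cond_eq g hr hg i y]
  have hk : (touch n i).card ≤ 2 := touch_card_le i
  set k := (touch n i).card with hkdef
  have hcross : R ^ k * r ^ 2 ≤ R ^ 2 * r ^ k := by
    interval_cases k
    · simpa using pow_le_pow_left₀ hr.le hrR 2
    · simp only [pow_one]
      nlinarith [mul_nonneg (mul_nonneg (hr.trans_le hrR).le hr.le) (sub_nonneg.2 hrR)]
    · nlinarith [pow_pos hr 2, pow_pos (hr.trans_le hrR) 2]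
  calc tv (fun a => locw g i x a / ∑ b, locw g i x b)
        (fun a => locw g i y a / ∑ b, locw g i y b)
      ≤ (R ^ k - r ^ k) / (R ^ k + r ^ k) :=
        tv_norm_le (pow_pos hr k) (pow_le_pow_left₀ hr.le hrR k) _ _
          (locw_mem g hr hg i x) (locw_mem g hr hg i y)
    _ ≤ (R ^ 2 - r ^ 2) / (R ^ 2 + r ^ 2) :=
        frac_mono (pow_pos hr k) (pow_le_pow_left₀ hr.le hrR k)
          (pow_pos hr 2) (pow_le_pow_left₀ hr.le hrR 2) hcross

end helpers

/-- The Gibbs dependence coefficient of an undirected Markov chain with potentials in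
[r,R] is at most (R²−r²)/(R²+r²). -/
theorem stmt_5 {Ω : Type*} [Fintype Ω] [DecidableEq Ω] [Nonempty Ω] {n : ℕ}
    (g : Fin n → Ω → Ω → ℝ) (r R : ℝ) (hr : 0 < r) (hrR : r ≤ R)
    (hg : ∀ i a b, g i a b ∈ Set.Icc r R) :
    (⨆ x : Fin (n + 1) → Ω, (1 / ((n : ℝ) + 1)) *
        ∑ i : Fin (n + 1), tv (marg (chainMeasure g) i) (condCoord (chainMeasure g) i x))
      ≤ (R ^ 2 - r ^ 2) / (R ^ 2 + r ^ 2) := by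
  set μ := chainMeasure g with hμ
  set δ := (R ^ 2 - r ^ 2) / (R ^ 2 + r ^ 2) with hδdef
  apply ciSup_le
  intro x
  have hterm : ∀ i : Fin (n + 1), tv (marg μ i) (condCoord μ i x) ≤ δ := by
    intro i
    have hmix : marg μ i = fun a => ∑ y : Fin (n + 1) → Ω, μ y * condCoord μ i y a :=
      funext (marg_mix g hr hg i)
    rw [hmix]
    calc tv (fun a => ∑ y : Fin (n + 1) → Ω, μ y * condCoord μ i y a) (condCoord μ i x)
        ≤ ∑ y : Fin (n + 1) → Ω, μ y * tv (condCoord μ i y) (condCoord μ i x) :=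
          tv_mix_le μ (fun y => condCoord μ i y) (condCoord μ i x)
            (fun y => (chainMeasure_pos g hr hg y).le) (chainMeasure_sum g hr hg)
      _ ≤ ∑ y : Fin (n + 1) → Ω, μ y * δ :=
          Finset.sum_le_sum fun y _ => mul_le_mul_of_nonneg_left
            (tv_cond_le g hr hrR hg i y x) (chainMeasure_pos g hr hg y).le
      _ = δ := by rw [← Finset.sum_mul, chainMeasure_sum g hr hg, one_mul]
  have hsum : ∑ i : Fin (n + 1), tv (marg μ i) (condCoord μ i x) ≤ ((n : ℝ) + 1) * δ := by
    calc ∑ i : Fin (n + 1), tv (marg μ i) (condCoord μ i x)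
        ≤ ∑ _i : Fin (n + 1), δ := Finset.sum_le_sum fun i _ => hterm i
      _ = ((n : ℝ) + 1) * δ := by
          rw [Finset.sum_const, card_univ, Fintype.card_fin, nsmul_eq_mul]
          push_cast; ring
  have hn : (0 : ℝ) < (n : ℝ) + 1 := by positivity
  calc (1 / ((n : ℝ) + 1)) * ∑ i : Fin (n + 1), tv (marg μ i) (condCoord μ i x)
      ≤ (1 / ((n : ℝ) + 1)) * (((n : ℝ) + 1) * δ) :=
        mul_le_mul_of_nonneg_left hsum (by positivity)
    _ = δ := by field_simp
end
end

section
/- Let M be a mechanism that enables transcript compression to b(n,k) bits and is (α,β)-empirically-accurate for k rounds given n samples (with probability ≥ 1−β all answers a_i satisfy |a_i − q_i(S)| ≤ α). Then M is (α, β + δ·k·2^{b(n,k)}, δ)-statistically-query-accurate: for every measure μ on X^n and every analyst, with probability at least 1 − β − δ·k·2^{b(n,k)}, every answer satisfies |a_i − q_i(μ)| ≤ α + γ(q_i, μ, δ). -/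
open Finset
open scoped Classical

noncomputable section

/-- Expected value of a query under a finite distribution. -/
def qMean {α : Type*} [Fintype α] (μ : α → ℝ) (q : α → ℝ) : ℝ :=
  ∑ S : α, μ S * q S

/-- γ(q,μ,δ): the minimal γ ≥ 0 such that Pr_{S∼μ}[|q(S) − q(μ)| > γ] < δ. -/
def gammaConc {α : Type*} [Fintype α] (μ : α → ℝ) (δ : ℝ) (q : α → ℝ) : ℝ :=
  sInf {γ : ℝ | 0 ≤ γ ∧ (∑ S : α, if γ < |q S - qMean μ q| then μ S else 0) < δ}

set_option maxHeartbeats 1000000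

lemma gammaConc_tail_lt {α : Type*} [Fintype α] (μ : α → ℝ)
    (δ : ℝ) (hδ : 0 < δ) (q : α → ℝ) :
    (∑ S : α, if gammaConc μ δ q < |q S - qMean μ q| then μ S else 0) < δ := by
  set m := qMean μ q with hm
  set T : Set ℝ := {γ : ℝ | 0 ≤ γ ∧ (∑ S : α, if γ < |q S - m| then μ S else 0) < δ}
    with hT
  have hγs : gammaConc μ δ q = sInf T := rfl
  have hγ0 : (∑ S : α, |q S - m|) ∈ T := by
    refine ⟨by positivity, ?_⟩
    have h0 : (∑ S : α, if (∑ S' : α, |q S' - m|) < |q S - m| then μ S else 0) = 0 := by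
      apply Finset.sum_eq_zero
      intro S _
      rw [if_neg]
      push_neg
      exact Finset.single_le_sum (f := fun S' : α => |q S' - m|)
        (fun i _ => abs_nonneg _) (mem_univ S)
    rw [h0]; exact hδ
  have hne : T.Nonempty := ⟨_, hγ0⟩
  have hbd : BddBelow T := ⟨0, fun γ hγ => hγ.1⟩
  rw [hγs]
  by_cases hV : ∃ S : α, sInf T < |q S - m|
  · obtain ⟨S₀, hS₀, hmin⟩ := Finset.exists_min_image
      (Finset.univ.filter (fun S : α => sInf T < |q S - m|)) (fun S => |q S - m|)
      (by obtain ⟨S, hS⟩ := hV; exact ⟨S, by simp [hS]⟩)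
    have hS₀' : sInf T < |q S₀ - m| := (Finset.mem_filter.mp hS₀).2
    obtain ⟨γ, hγT, hγlt⟩ := (csInf_lt_iff hbd hne).mp hS₀'
    have hle : sInf T ≤ γ := csInf_le hbd hγT
    have hcong : (∑ S : α, if sInf T < |q S - m| then μ S else 0)
        = ∑ S : α, if γ < |q S - m| then μ S else 0 := by
      apply Finset.sum_congr rfl
      intro S _
      congr 1
      simp only [eq_iff_iff]
      constructor
      · intro h
        have : |q S₀ - m| ≤ |q S - m| := hmin S (by simp [h])
        linarith
      · intro h; linarith
    rw [hcong]; exact hγT.2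
  · push_neg at hV
    have h0 : (∑ S : α, if sInf T < |q S - m| then μ S else 0) = 0 :=
      Finset.sum_eq_zero fun S _ => if_neg (not_lt.mpr (hV S))
    rw [h0]; exact hδ

lemma ite_zero_nonneg {c : Prop} [Decidable c] {x : ℝ} (hx : 0 ≤ x) :
    (0:ℝ) ≤ if c then x else 0 := by
  split_ifs with h
  · exact hx
  · exact le_rfl

theorem stmt_13_aux {X R : Type*} [Fintype X] [Fintype R] (n k b : ℕ)
    (μ : (Fin n → X) → ℝ) (hμ : ∀ S, 0 ≤ μ S)
    (ρ : R → ℝ) (hρ : ∀ r, 0 ≤ ρ r) (hρ1 : ∑ r : R, ρ r = 1)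
    (Q : R → (Fin n → X) → Fin k → ((Fin n → X) → ℝ))
    (Ans : R → (Fin n → X) → Fin k → ℝ)
    (α β δ : ℝ) (hδ : 0 < δ)
    (g m : ((Fin n → X) → ℝ) → ℝ)
    (htail : ∀ q, (∑ S : Fin n → X, if g q < |q S - m q| then μ S else 0) < δ)
    (H : Finset (Fin k → (((Fin n → X) → ℝ) × ℝ)))
    (hH : H.card ≤ 2 ^ b)
    (hcomp : ∀ r S, 0 < ρ r → 0 < μ S → (fun i => (Q r S i, Ans r S i)) ∈ H)
    (hemp : (∑ r : R, ∑ S : Fin n → X,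
        if ∃ i : Fin k, α < |Ans r S i - Q r S i S| then ρ r * μ S else 0) ≤ β) :
    (∑ r : R, ∑ S : Fin n → X,
        if ∃ i : Fin k, α + g (Q r S i) < |Ans r S i - m (Q r S i)|
        then ρ r * μ S else 0)
      ≤ β + δ * k * 2 ^ b := by
  classical
  set C : R → (Fin n → X) → Prop :=
    fun r S => ∃ i : Fin k, g (Q r S i) < |Q r S i S - m (Q r S i)|
    with hC
  -- Step 1: pointwise split via triangle inequality
  have h1 : (∑ r : R, ∑ S : Fin n → X,
        if ∃ i : Fin k, α + g (Q r S i) < |Ans r S i - m (Q r S i)|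
        then ρ r * μ S else 0)
      ≤ (∑ r : R, ∑ S : Fin n → X,
          if ∃ i : Fin k, α < |Ans r S i - Q r S i S| then ρ r * μ S else 0)
        + (∑ r : R, ∑ S : Fin n → X, if C r S then ρ r * μ S else 0) := by
    rw [← Finset.sum_add_distrib]
    apply Finset.sum_le_sum
    intro r _
    rw [← Finset.sum_add_distrib]
    apply Finset.sum_le_sum
    intro S _
    have ht : 0 ≤ ρ r * μ S := mul_nonneg (hρ r) (hμ S)
    split_ifs with hb he hc hc
    · linarith
    · linarith
    · linarith
    · exfalso
      obtain ⟨i, hi⟩ := hb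
      simp only [not_exists, not_lt] at he
      simp only [hC, not_exists, not_lt] at hc
      have h1 := he i
      have h2 := hc i
      have htri : |Ans r S i - m (Q r S i)|
          ≤ |Ans r S i - Q r S i S| + |Q r S i S - m (Q r S i)| := by
        calc |Ans r S i - m (Q r S i)|
            = |(Ans r S i - Q r S i S) + (Q r S i S - m (Q r S i))| := by ring_nf
          _ ≤ _ := abs_add_le _ _
      linarith
    · linarith
    · linarith
    · linarith
    · linarith
  -- Step 2: per-r bound on the C-mass
  have h2 : ∀ r : R, (∑ S : Fin n → X, if C r S then ρ r * μ S else 0)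
      ≤ (H.card : ℝ) * k * (ρ r * δ) := by
    intro r
    have hA : (∑ S : Fin n → X, if C r S then ρ r * μ S else 0)
        ≤ ∑ S : Fin n → X, ∑ h ∈ H, ∑ i : Fin k,
            if g (h i).1 < |(h i).1 S - m (h i).1|
            then ρ r * μ S else 0 := by
      apply Finset.sum_le_sum
      intro S _
      have ht : 0 ≤ ρ r * μ S := mul_nonneg (hρ r) (hμ S)
      have hRnn : ∀ h ∈ H, 0 ≤ ∑ i : Fin k,
          if g (h i).1 < |(h i).1 S - m (h i).1|
          then ρ r * μ S else 0 := by
        intro h _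
        exact Finset.sum_nonneg fun i _ => ite_zero_nonneg ht
      by_cases hc : C r S
      · rw [if_pos hc]
        rcases eq_or_lt_of_le ht with h0 | hpos
        · calc ρ r * μ S = 0 := h0.symm
            _ ≤ _ := Finset.sum_nonneg hRnn
        · have hρr : 0 < ρ r := by
            rcases (hρ r).lt_or_eq with h | h
            · exact h
            · exfalso; rw [← h] at hpos; simp at hpos
          have hμS : 0 < μ S := by
            rcases (hμ S).lt_or_eq with h | h
            · exact h
            · exfalso; rw [← h] at hpos; simp at hpos
          obtain ⟨i, hi⟩ := hc
          set h₀ : Fin k → (((Fin n → X) → ℝ) × ℝ) := fun j => (Q r S j, Ans r S j)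
            with hh₀
          have hmem : h₀ ∈ H := hcomp r S hρr hμS
          have hi' : g (h₀ i).1 < |(h₀ i).1 S - m (h₀ i).1| := by
            simp only [hh₀]; exact hi
          calc ρ r * μ S
              = (if g (h₀ i).1 < |(h₀ i).1 S - m (h₀ i).1|
                  then ρ r * μ S else 0) := (if_pos hi').symm
            _ ≤ ∑ i : Fin k,
                  if g (h₀ i).1 < |(h₀ i).1 S - m (h₀ i).1|
                  then ρ r * μ S else 0 :=
                Finset.single_le_sum (f := fun i : Fin k =>
                  if g (h₀ i).1 < |(h₀ i).1 S - m (h₀ i).1|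
                  then ρ r * μ S else 0)
                  (fun i _ => ite_zero_nonneg ht) (mem_univ i)
            _ ≤ _ := Finset.single_le_sum (f := fun h => ∑ i : Fin k,
                  if g (h i).1 < |(h i).1 S - m (h i).1|
                  then ρ r * μ S else 0) hRnn hmem
      · rw [if_neg hc]
        exact Finset.sum_nonneg fun h hh => hRnn h hh
    have hB : (∑ S : Fin n → X, ∑ h ∈ H, ∑ i : Fin k,
            if g (h i).1 < |(h i).1 S - m (h i).1|
            then ρ r * μ S else 0)
        = ∑ h ∈ H, ∑ i : Fin k, ∑ S : Fin n → X,
            if g (h i).1 < |(h i).1 S - m (h i).1|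
            then ρ r * μ S else 0 := by
      rw [Finset.sum_comm]
      exact Finset.sum_congr rfl fun h _ => Finset.sum_comm
    have hCc : ∀ h ∈ H, ∀ i : Fin k,
        (∑ S : Fin n → X, if g (h i).1 < |(h i).1 S - m (h i).1|
            then ρ r * μ S else 0) ≤ ρ r * δ := by
      intro h _ i
      have : (∑ S : Fin n → X,
          if g (h i).1 < |(h i).1 S - m (h i).1|
          then ρ r * μ S else 0)
        = ρ r * ∑ S : Fin n → X,
            if g (h i).1 < |(h i).1 S - m (h i).1|
            then μ S else 0 := by
        simp only [Finset.mul_sum, mul_ite, mul_zero]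
      rw [this]
      exact mul_le_mul_of_nonneg_left (le_of_lt (htail _)) (hρ r)
    calc (∑ S : Fin n → X, if C r S then ρ r * μ S else 0)
        ≤ ∑ h ∈ H, ∑ i : Fin k, ∑ S : Fin n → X,
            if g (h i).1 < |(h i).1 S - m (h i).1|
            then ρ r * μ S else 0 := by rw [← hB]; exact hA
      _ ≤ ∑ h ∈ H, ∑ i : Fin k, ρ r * δ := by
            apply Finset.sum_le_sum
            intro h hh
            exact Finset.sum_le_sum fun i _ => hCc h hh i
      _ = (H.card : ℝ) * k * (ρ r * δ) := by
            rw [Finset.sum_const, Finset.sum_const, Finset.card_univ, Fintype.card_fin,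
              nsmul_eq_mul, nsmul_eq_mul]
            ring
  -- combine
  have h3 : (∑ r : R, ∑ S : Fin n → X, if C r S then ρ r * μ S else 0)
      ≤ δ * k * 2 ^ b := by
    calc (∑ r : R, ∑ S : Fin n → X, if C r S then ρ r * μ S else 0)
        ≤ ∑ r : R, (H.card : ℝ) * k * (ρ r * δ) := Finset.sum_le_sum fun r _ => h2 r
      _ = (H.card : ℝ) * k * δ := by
          have hsum : (∑ r : R, (H.card : ℝ) * k * (ρ r * δ))
              = (H.card : ℝ) * k * δ * ∑ r : R, ρ r := by
            rw [Finset.mul_sum]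
            exact Finset.sum_congr rfl fun r _ => by ring
          rw [hsum, hρ1, mul_one]
      _ ≤ δ * k * 2 ^ b := by
          have hcard : (H.card : ℝ) ≤ 2 ^ b := by exact_mod_cast hH
          have hk : (0:ℝ) ≤ (k:ℝ) := Nat.cast_nonneg k
          calc (H.card : ℝ) * k * δ ≤ (2 ^ b : ℝ) * k * δ := by
                apply mul_le_mul_of_nonneg_right _ hδ.le
                exact mul_le_mul_of_nonneg_right hcard hk
            _ = δ * k * 2 ^ b := by ring
  linarith [h1, hemp, h3]

/-- If a mechanism enables transcript compression to b bits and is (α,β)-empirically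
accurate, then it is (α, β + δ·k·2^b, δ)-statistically-query-accurate: with probability
at least 1 − β − δ·k·2^b every answer is within α + γ(q_i,μ,δ) of the population value
of the corresponding query. -/
theorem stmt_13 {X R : Type*} [Fintype X] [Fintype R] (n k b : ℕ)
    (μ : (Fin n → X) → ℝ) (hμ : ∀ S, 0 ≤ μ S) (hμ1 : ∑ S : Fin n → X, μ S = 1)
    (ρ : R → ℝ) (hρ : ∀ r, 0 ≤ ρ r) (hρ1 : ∑ r : R, ρ r = 1)
    (Q : R → (Fin n → X) → Fin k → ((Fin n → X) → ℝ))
    (Ans : R → (Fin n → X) → Fin k → ℝ)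
    (α β δ : ℝ) (hδ : 0 < δ)
    (H : Finset (Fin k → (((Fin n → X) → ℝ) × ℝ)))
    (hH : H.card ≤ 2 ^ b)
    (hcomp : ∀ r S, 0 < ρ r → 0 < μ S → (fun i => (Q r S i, Ans r S i)) ∈ H)
    (hemp : (∑ r : R, ∑ S : Fin n → X,
        if ∃ i : Fin k, α < |Ans r S i - Q r S i S| then ρ r * μ S else 0) ≤ β) :
    (∑ r : R, ∑ S : Fin n → X,
        if ∃ i : Fin k, α + gammaConc μ δ (Q r S i) < |Ans r S i - qMean μ (Q r S i)|
        then ρ r * μ S else 0)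
      ≤ β + δ * k * 2 ^ b :=
  stmt_13_aux n k b μ hμ ρ hρ hρ1 Q Ans α β δ hδ (gammaConc μ δ) (qMean μ)
    (fun q => gammaConc_tail_lt μ δ hδ q) H hH hcomp hemp
end
end

section
/- Let A' : (X^n)^T → 2^X × [T] be (ε,δ)-differentially private (neighboring inputs differ in one element of one of the T samples), and let μ on X^n have Gibbs dependence ψ. If S⃗ = (S_1,…,S_T) with each S_t ∼ μ independently, and (h,t) = A'(S⃗), then |E[h(μ) − h(S_t)]| ≤ e^ε + Tδ + ψ − 1, where h(S_t) = (1/n)∑_{x∈S_t} h(x) and h(μ) = E_{T'∼μ}[(1/n)∑_{x∈T'} h(x)]. -/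
open Finset

noncomputable section

/-- Empirical mean of a predicate on a sample. -/
def empMean {X : Type*} {n : ℕ} (S : Fin n → X) (h : X → Bool) : ℝ :=
  (1 / (n : ℝ)) * ∑ i : Fin n, if h (S i) then (1 : ℝ) else 0

/-- Population value h(μ) = E_{T∼μ}[(1/n)∑_i h(T_i)]. -/
def popMean {X : Type*} [Fintype X] {n : ℕ} (μ : (Fin n → X) → ℝ) (h : X → Bool) : ℝ :=
  ∑ S : Fin n → X, μ S * empMean S h

set_option linter.unusedSectionVars false
set_option maxHeartbeats 1000000
set_option synthInstance.maxHeartbeats 400000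

namespace Stmt17
variable {X : Type*} [Fintype X] [DecidableEq X] {n T : ℕ}

def PP (μ : (Fin n → X) → ℝ) (Svec : Fin T → Fin n → X) : ℝ := ∏ t, μ (Svec t)

def upd (Svec : Fin T → Fin n → X) (t : Fin T) (i : Fin n) (a : X) :
    Fin T → Fin n → X :=
  Function.update Svec t (Function.update (Svec t) i a)

lemma upd_apply_t (Svec : Fin T → Fin n → X) (t : Fin T) (i : Fin n) (a : X) :
    upd Svec t i a t = Function.update (Svec t) i a := by simp [upd]

lemma upd_invol (Svec : Fin T → Fin n → X) (t : Fin T) (i : Fin n) (a : X) :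
    upd (upd Svec t i a) t i (Svec t i) = Svec := by
  simp only [upd, Function.update_self, Function.update_idem, Function.update_eq_self]

lemma cond_upd (μ : (Fin n → X) → ℝ) (i : Fin n) (x : Fin n → X) (a b : X) :
    condCoord μ i (Function.update x i a) b = condCoord μ i x b := by
  simp [condCoord, Function.update_idem]

lemma PP_upd (μ : (Fin n → X) → ℝ) (Svec : Fin T → Fin n → X) (t : Fin T)
    (y : Fin n → X) :
    PP μ (Function.update Svec t y) = μ y * ∏ t' ∈ univ \ {t}, μ (Svec t') := by
  unfold PP
  rw [← Finset.prod_update_of_mem (Finset.mem_univ t) (f := fun t' => μ (Svec t'))]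
  congr 1; ext t'
  by_cases h : t' = t <;> simp [h, Function.update]

lemma core_weight (μ : (Fin n → X) → ℝ) (i : Fin n) (x : Fin n → X) (a : X) :
    μ (Function.update x i a) * condCoord μ i x (x i) = μ x * condCoord μ i x a := by
  simp only [condCoord, Function.update_eq_self]
  ring

lemma weight_inv (μ : (Fin n → X) → ℝ) (Svec : Fin T → Fin n → X) (t : Fin T)
    (i : Fin n) (a : X) :
    PP μ (upd Svec t i a) * condCoord μ i ((upd Svec t i a) t) (Svec t i)
      = PP μ Svec * condCoord μ i (Svec t) a := by
  rw [upd_apply_t, cond_upd]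
  unfold upd
  rw [PP_upd]
  have : PP μ Svec = μ (Svec t) * ∏ t' ∈ univ \ {t}, μ (Svec t') := by
    have := PP_upd μ Svec t (Svec t)
    rwa [Function.update_eq_self] at this
  rw [this]
  linear_combination (∏ t' ∈ univ \ {t}, μ (Svec t')) * core_weight μ i (Svec t) a

/-- Exchangeability of resampled coordinate with original. -/
lemma exchange (μ : (Fin n → X) → ℝ) (t : Fin T) (i : Fin n)
    (g : (Fin T → Fin n → X) → X → ℝ) :
    ∑ Svec : Fin T → Fin n → X, ∑ a : X,
      PP μ Svec * condCoord μ i (Svec t) a * g (upd Svec t i a) (Svec t i)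
    = ∑ Svec : Fin T → Fin n → X, ∑ a : X,
      PP μ Svec * condCoord μ i (Svec t) a * g Svec a := by
  have hinv : Function.Involutive
      (fun p : (Fin T → Fin n → X) × X => (upd p.1 t i p.2, p.1 t i)) := by
    intro p
    simp only [upd_invol]
    simp [upd]
  have main : ∑ p : (Fin T → Fin n → X) × X,
      PP μ p.1 * condCoord μ i (p.1 t) p.2 * g (upd p.1 t i p.2) (p.1 t i)
    = ∑ p : (Fin T → Fin n → X) × X,
      PP μ p.1 * condCoord μ i (p.1 t) p.2 * g p.1 p.2 := by
    refine Fintype.sum_equiv hinv.toPerm _ _ ?_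
    intro p
    simp only [Function.Involutive.coe_toPerm]
    calc PP μ p.1 * condCoord μ i (p.1 t) p.2 * g (upd p.1 t i p.2) (p.1 t i)
        = PP μ (upd p.1 t i p.2) * condCoord μ i ((upd p.1 t i p.2) t) (p.1 t i) *
            g (upd p.1 t i p.2) (p.1 t i) := by rw [weight_inv]
      _ = _ := by rfl
  rw [Fintype.sum_prod_type, Fintype.sum_prod_type] at main
  exact main

def ind (b : Bool) : ℝ := if b then 1 else 0
lemma ind_nonneg (b : Bool) : 0 ≤ ind b := by unfold ind; split <;> norm_num
lemma ind_le_one (b : Bool) : ind b ≤ 1 := by unfold ind; split <;> norm_num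

section Facts
variable (μ : (Fin n → X) → ℝ) (hμ : ∀ S, 0 ≤ μ S) (hμ1 : ∑ S : Fin n → X, μ S = 1)
  (hfull : ∀ (x : Fin n → X) (i : Fin n), 0 < ∑ b : X, μ (Function.update x i b))

include hμ in
lemma cond_nonneg (i : Fin n) (x : Fin n → X) (a : X) : 0 ≤ condCoord μ i x a := by
  unfold condCoord
  apply div_nonneg (hμ _)
  exact Finset.sum_nonneg fun b _ => hμ _

include hfull in
lemma cond_sum_one (i : Fin n) (x : Fin n → X) : ∑ a : X, condCoord μ i x a = 1 := by
  unfold condCoord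
  rw [← Finset.sum_div, div_self (hfull x i).ne']

include hμ in
lemma marg_nonneg (i : Fin n) (a : X) : 0 ≤ marg μ i a :=
  Finset.sum_nonneg fun x _ => by split <;> [exact hμ _; exact le_rfl]

include hμ1 in
lemma marg_sum_one (i : Fin n) : ∑ a : X, marg μ i a = 1 := by
  unfold marg
  rw [Finset.sum_comm]
  simp [hμ1]

include hμ in
lemma PP_nonneg (Svec : Fin T → Fin n → X) : 0 ≤ PP μ Svec :=
  Finset.prod_nonneg fun t _ => hμ _

include hμ1 in
lemma PP_sum_one : ∑ Svec : Fin T → Fin n → X, PP μ Svec = 1 := by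
  unfold PP
  rw [← Fintype.prod_sum fun _ S => μ S]
  simp [hμ1]

end Facts

section Main
variable (ε δ : ℝ)
variable (A : (Fin T → Fin n → X) → ((X → Bool) × Fin T) → ℝ)

def Fq (A : (Fin T → Fin n → X) → ((X → Bool) × Fin T) → ℝ)
    (t : Fin T) (Svec : Fin T → Fin n → X) (b : X) : ℝ :=
  ∑ o : (X → Bool) × Fin T, if o.2 = t then A Svec o * ind (o.1 b) else 0

lemma Fq_as_filter (t : Fin T) (Svec : Fin T → Fin n → X) (b : X) :
    Fq A t Svec b = ∑ o ∈ univ.filter (fun o : (X → Bool) × Fin T => o.2 = t ∧ o.1 b = true),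
      A Svec o := by
  rw [Finset.sum_filter]
  unfold Fq
  apply Finset.sum_congr rfl
  intro o _
  by_cases h1 : o.2 = t <;> by_cases h2 : o.1 b <;> simp [h1, h2, ind]

lemma neighbor (Svec : Fin T → Fin n → X) (t : Fin T) (i : Fin n) (a : X) :
    ∀ t' i', (t', i') ≠ (t, i) → Svec t' i' = upd Svec t i a t' i' := by
  intro t' i' hne
  unfold upd
  by_cases h : t' = t
  · subst h
    simp only [Function.update_self]
    have : i' ≠ i := by simpa [Prod.ext_iff] using hne
    rw [Function.update_of_ne this]
  · rw [Function.update_of_ne h]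

variable (hDP : ∀ Svec Svec' : Fin T → Fin n → X,
      (∃ t i, ∀ t' i', (t', i') ≠ (t, i) → Svec t' i' = Svec' t' i') →
      ∀ B : Finset ((X → Bool) × Fin T),
        ∑ o ∈ B, A Svec o ≤ Real.exp ε * ∑ o ∈ B, A Svec' o + δ)

include hDP in
lemma dp_fwd (Svec : Fin T → Fin n → X) (t : Fin T) (i : Fin n) (a b : X) :
    Fq A t (upd Svec t i a) b ≤ Real.exp ε * Fq A t Svec b + δ := by
  rw [Fq_as_filter, Fq_as_filter]
  apply hDP
  exact ⟨t, i, fun t' i' h => (neighbor Svec t i a t' i' h).symm⟩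

include hDP in
lemma dp_bwd (Svec : Fin T → Fin n → X) (t : Fin T) (i : Fin n) (a b : X) :
    Fq A t Svec b ≤ Real.exp ε * Fq A t (upd Svec t i a) b + δ := by
  rw [Fq_as_filter, Fq_as_filter]
  apply hDP
  exact ⟨t, i, neighbor Svec t i a⟩

end Main

section Quant
variable (μ : (Fin n → X) → ℝ)
variable (A : (Fin T → Fin n → X) → ((X → Bool) × Fin T) → ℝ)

def Hq (t : Fin T) (i : Fin n) : ℝ :=
  ∑ Svec : Fin T → Fin n → X, PP μ Svec * Fq A t Svec (Svec t i)

def Gq (t : Fin T) (i : Fin n) : ℝ :=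
  ∑ Svec : Fin T → Fin n → X, ∑ a : X,
    PP μ Svec * condCoord μ i (Svec t) a * Fq A t Svec a

def Mq (t : Fin T) (i : Fin n) : ℝ :=
  ∑ Svec : Fin T → Fin n → X, PP μ Svec *
    ∑ o : (X → Bool) × Fin T,
      if o.2 = t then A Svec o * (∑ a : X, marg μ i a * ind (o.1 a)) else 0

variable (hμ : ∀ S, 0 ≤ μ S) (hμ1 : ∑ S : Fin n → X, μ S = 1)
  (hfull : ∀ (x : Fin n → X) (i : Fin n), 0 < ∑ b : X, μ (Function.update x i b))
  (hA : ∀ Svec, (∀ o, 0 ≤ A Svec o) ∧ ∑ o : (X → Bool) × Fin T, A Svec o = 1)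

lemma upd_t_i (Svec : Fin T → Fin n → X) (t : Fin T) (i : Fin n) (a : X) :
    upd Svec t i a t i = a := by simp [upd]

include hfull in
lemma Hq_alt (t : Fin T) (i : Fin n) :
    Hq μ A t i = ∑ Svec : Fin T → Fin n → X, ∑ a : X,
      PP μ Svec * condCoord μ i (Svec t) a * Fq A t (upd Svec t i a) a := by
  have e := exchange μ t i (fun S _ => Fq A t S (S t i))
  simp only [upd_t_i] at e
  rw [e]
  unfold Hq
  refine Finset.sum_congr rfl fun Svec _ => ?_
  have h2 : ∑ a : X, PP μ Svec * condCoord μ i (Svec t) a * Fq A t Svec (Svec t i)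
      = (∑ a : X, condCoord μ i (Svec t) a) * (PP μ Svec * Fq A t Svec (Svec t i)) := by
    rw [Finset.sum_mul]
    exact Finset.sum_congr rfl fun a _ => by ring
  rw [h2, cond_sum_one μ hfull, one_mul]

include hμ hA in
lemma Fq_nonneg (t : Fin T) (Svec : Fin T → Fin n → X) (b : X) : 0 ≤ Fq A t Svec b := by
  refine Finset.sum_nonneg fun o _ => ?_
  split
  · exact mul_nonneg ((hA Svec).1 o) (ind_nonneg _)
  · exact le_rfl

include hA in
lemma Fq_sum_t (Svec : Fin T → Fin n → X) (bf : Fin T → X) :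
    ∑ t, Fq A t Svec (bf t) ≤ 1 := by
  unfold Fq
  rw [Finset.sum_comm]
  have key : ∀ o : (X → Bool) × Fin T,
      (∑ t, if o.2 = t then A Svec o * ind (o.1 (bf t)) else 0)
        = A Svec o * ind (o.1 (bf o.2)) := by
    intro o
    rw [Finset.sum_ite_eq]
    simp
  rw [Finset.sum_congr rfl fun o _ => key o]
  calc ∑ o : (X → Bool) × Fin T, A Svec o * ind (o.1 (bf o.2))
      ≤ ∑ o : (X → Bool) × Fin T, A Svec o * 1 :=
        Finset.sum_le_sum fun o _ => mul_le_mul_of_nonneg_left (ind_le_one _) ((hA Svec).1 o)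
    _ = 1 := by simp [(hA Svec).2]

include hμ hA in
lemma Hq_nonneg (t : Fin T) (i : Fin n) : 0 ≤ Hq μ A t i :=
  Finset.sum_nonneg fun S _ => mul_nonneg (PP_nonneg μ hμ S) (Fq_nonneg μ A hμ hA t S _)

include hμ hA in
lemma Gq_nonneg (t : Fin T) (i : Fin n) : 0 ≤ Gq μ A t i :=
  Finset.sum_nonneg fun S _ => Finset.sum_nonneg fun a _ =>
    mul_nonneg (mul_nonneg (PP_nonneg μ hμ S) (cond_nonneg μ hμ i _ a))
      (Fq_nonneg μ A hμ hA t S a)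

include hμ hμ1 hA in
lemma Hq_sum_t (i : Fin n) : ∑ t, Hq μ A t i ≤ 1 := by
  unfold Hq
  rw [Finset.sum_comm]
  calc ∑ S : Fin T → Fin n → X, ∑ t, PP μ S * Fq A t S (S t i)
      = ∑ S : Fin T → Fin n → X, PP μ S * ∑ t, Fq A t S (S t i) := by
        simp [Finset.mul_sum]
    _ ≤ ∑ S : Fin T → Fin n → X, PP μ S * 1 :=
        Finset.sum_le_sum fun S _ => mul_le_mul_of_nonneg_left
          (Fq_sum_t A hA S fun t => S t i) (PP_nonneg μ hμ S)
    _ = 1 := by simp [PP_sum_one μ hμ1]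

def pt (Svec : Fin T → Fin n → X) (t : Fin T) : ℝ :=
  ∑ o : (X → Bool) × Fin T, if o.2 = t then A Svec o else 0

include hA in
lemma pt_nonneg (Svec : Fin T → Fin n → X) (t : Fin T) : 0 ≤ pt A Svec t := by
  refine Finset.sum_nonneg fun o _ => ?_
  split
  · exact (hA Svec).1 o
  · exact le_rfl

include hA in
lemma pt_sum (Svec : Fin T → Fin n → X) : ∑ t, pt A Svec t = 1 := by
  unfold pt
  rw [Finset.sum_comm]
  have key : ∀ o : (X → Bool) × Fin T,
      (∑ t, if o.2 = t then A Svec o else 0) = A Svec o := by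
    intro o
    rw [Finset.sum_ite_eq]
    simp
  rw [Finset.sum_congr rfl fun o _ => key o, (hA Svec).2]

include hA in
lemma Fq_le_pt (t : Fin T) (Svec : Fin T → Fin n → X) (b : X) :
    Fq A t Svec b ≤ pt A Svec t := by
  refine Finset.sum_le_sum fun o _ => ?_
  split
  · calc A Svec o * ind (o.1 b) ≤ A Svec o * 1 :=
        mul_le_mul_of_nonneg_left (ind_le_one _) ((hA Svec).1 o)
      _ = A Svec o := mul_one _
  · exact le_rfl

include hμ hμ1 hfull hA in
lemma Gq_sum_t (i : Fin n) : ∑ t, Gq μ A t i ≤ 1 := by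
  unfold Gq
  rw [Finset.sum_comm]
  calc ∑ S : Fin T → Fin n → X, ∑ t, ∑ a : X,
        PP μ S * condCoord μ i (S t) a * Fq A t S a
      ≤ ∑ S : Fin T → Fin n → X, PP μ S * 1 := by
        refine Finset.sum_le_sum fun S _ => ?_
        calc ∑ t, ∑ a : X, PP μ S * condCoord μ i (S t) a * Fq A t S a
            ≤ ∑ t, ∑ a : X, PP μ S * condCoord μ i (S t) a * pt A S t := by
              refine Finset.sum_le_sum fun t _ => Finset.sum_le_sum fun a _ => ?_
              exact mul_le_mul_of_nonneg_left (Fq_le_pt A hA t S a)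
                (mul_nonneg (PP_nonneg μ hμ S) (cond_nonneg μ hμ i _ a))
          _ = ∑ t, PP μ S * pt A S t := by
              refine Finset.sum_congr rfl fun t _ => ?_
              have : ∑ a : X, PP μ S * condCoord μ i (S t) a * pt A S t
                  = (∑ a : X, condCoord μ i (S t) a) * (PP μ S * pt A S t) := by
                rw [Finset.sum_mul]
                exact Finset.sum_congr rfl fun a _ => by ring
              rw [this, cond_sum_one μ hfull, one_mul]
          _ = PP μ S * 1 := by rw [← Finset.mul_sum, pt_sum A hA S]
    _ = 1 := by simp [PP_sum_one μ hμ1]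

include hμ1 hfull in
lemma wsum_one (t : Fin T) (i : Fin n) :
    ∑ S : Fin T → Fin n → X, ∑ a : X, PP μ S * condCoord μ i (S t) a = 1 := by
  have : ∀ S : Fin T → Fin n → X, ∑ a : X, PP μ S * condCoord μ i (S t) a = PP μ S := by
    intro S
    rw [← Finset.mul_sum, cond_sum_one μ hfull, mul_one]
  rw [Finset.sum_congr rfl fun S _ => this S, PP_sum_one μ hμ1]

variable (ε δ : ℝ)
variable (hDP : ∀ Svec Svec' : Fin T → Fin n → X,
      (∃ t i, ∀ t' i', (t', i') ≠ (t, i) → Svec t' i' = Svec' t' i') →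
      ∀ B : Finset ((X → Bool) × Fin T),
        ∑ o ∈ B, A Svec o ≤ Real.exp ε * ∑ o ∈ B, A Svec' o + δ)

include hμ hμ1 hfull hDP in
lemma Hq_le_Gq (t : Fin T) (i : Fin n) :
    Hq μ A t i ≤ Real.exp ε * Gq μ A t i + δ := by
  rw [Hq_alt μ A hfull]
  calc ∑ S : Fin T → Fin n → X, ∑ a : X,
        PP μ S * condCoord μ i (S t) a * Fq A t (upd S t i a) a
      ≤ ∑ S : Fin T → Fin n → X, ∑ a : X,
        PP μ S * condCoord μ i (S t) a * (Real.exp ε * Fq A t S a + δ) := by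
        refine Finset.sum_le_sum fun S _ => Finset.sum_le_sum fun a _ => ?_
        exact mul_le_mul_of_nonneg_left (dp_fwd ε δ A hDP S t i a a)
          (mul_nonneg (PP_nonneg μ hμ S) (cond_nonneg μ hμ i _ a))
    _ = Real.exp ε * Gq μ A t i +
        δ * ∑ S : Fin T → Fin n → X, ∑ a : X, PP μ S * condCoord μ i (S t) a := by
        unfold Gq
        simp only [Finset.mul_sum]
        rw [← Finset.sum_add_distrib]
        refine Finset.sum_congr rfl fun S _ => ?_
        rw [← Finset.sum_add_distrib]
        refine Finset.sum_congr rfl fun a _ => by ring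
    _ = Real.exp ε * Gq μ A t i + δ := by rw [wsum_one μ hμ1 hfull, mul_one]

include hμ hμ1 hfull hDP in
lemma Gq_le_Hq (t : Fin T) (i : Fin n) :
    Gq μ A t i ≤ Real.exp ε * Hq μ A t i + δ := by
  rw [Hq_alt μ A hfull]
  calc Gq μ A t i
      ≤ ∑ S : Fin T → Fin n → X, ∑ a : X,
        PP μ S * condCoord μ i (S t) a * (Real.exp ε * Fq A t (upd S t i a) a + δ) := by
        refine Finset.sum_le_sum fun S _ => Finset.sum_le_sum fun a _ => ?_
        exact mul_le_mul_of_nonneg_left (dp_bwd ε δ A hDP S t i a a)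
          (mul_nonneg (PP_nonneg μ hμ S) (cond_nonneg μ hμ i _ a))
    _ = Real.exp ε * (∑ S : Fin T → Fin n → X, ∑ a : X,
          PP μ S * condCoord μ i (S t) a * Fq A t (upd S t i a) a) +
        δ * ∑ S : Fin T → Fin n → X, ∑ a : X, PP μ S * condCoord μ i (S t) a := by
        simp only [Finset.mul_sum]
        rw [← Finset.sum_add_distrib]
        refine Finset.sum_congr rfl fun S _ => ?_
        rw [← Finset.sum_add_distrib]
        refine Finset.sum_congr rfl fun a _ => by ring
    _ = _ := by rw [wsum_one μ hμ1 hfull, mul_one]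

omit [Fintype X] [DecidableEq X] in
lemma tv_pair [Fintype X] (p q : X → ℝ) (hp : ∑ a : X, p a = 1) (hq : ∑ a : X, q a = 1)
    (f : X → ℝ) (hf0 : ∀ a, 0 ≤ f a) (hf1 : ∀ a, f a ≤ 1) :
    |∑ a : X, q a * f a - ∑ a : X, p a * f a| ≤ tv p q := by
  have key : ∑ a : X, q a * f a - ∑ a : X, p a * f a
      = ∑ a : X, (q a - p a) * (f a - 1/2) := by
    simp only [sub_mul, mul_sub, Finset.sum_sub_distrib]
    rw [← Finset.sum_mul, ← Finset.sum_mul, hp, hq]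
    ring
  rw [key, tv, Finset.mul_sum]
  calc |∑ a : X, (q a - p a) * (f a - 1/2)|
      ≤ ∑ a : X, |(q a - p a) * (f a - 1/2)| := Finset.abs_sum_le_sum_abs _ _
    _ ≤ ∑ a : X, 1/2 * |p a - q a| := by
        refine Finset.sum_le_sum fun a _ => ?_
        rw [abs_mul, abs_sub_comm (q a)]
        have h1 : |f a - 1/2| ≤ 1/2 := by
          rw [abs_le]
          constructor <;> [linarith [hf0 a]; linarith [hf1 a]]
        calc |p a - q a| * |f a - 1/2| ≤ |p a - q a| * (1/2) :=
            mul_le_mul_of_nonneg_left h1 (abs_nonneg _)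
          _ = 1/2 * |p a - q a| := by ring

lemma Gq_alt (t : Fin T) (i : Fin n) :
    Gq μ A t i = ∑ S : Fin T → Fin n → X, PP μ S *
      ∑ o : (X → Bool) × Fin T, (if o.2 = t then A S o else 0) *
        (∑ a : X, condCoord μ i (S t) a * ind (o.1 a)) := by
  unfold Gq Fq
  refine Finset.sum_congr rfl fun S _ => ?_
  have l1 : ∀ a : X, PP μ S * condCoord μ i (S t) a *
      (∑ o : (X → Bool) × Fin T, if o.2 = t then A S o * ind (o.1 a) else 0)
      = ∑ o : (X → Bool) × Fin T,
        PP μ S * condCoord μ i (S t) a * (if o.2 = t then A S o * ind (o.1 a) else 0) :=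
    fun a => Finset.mul_sum _ _ _
  rw [Finset.sum_congr rfl fun a _ => l1 a, Finset.sum_comm, Finset.mul_sum]
  refine Finset.sum_congr rfl fun o _ => ?_
  by_cases h : o.2 = t
  · simp only [h, if_true, Finset.mul_sum]
    exact Finset.sum_congr rfl fun a _ => by ring
  · simp [h]

lemma Mq_alt (t : Fin T) (i : Fin n) :
    Mq μ A t i = ∑ S : Fin T → Fin n → X, PP μ S *
      ∑ o : (X → Bool) × Fin T, (if o.2 = t then A S o else 0) *
        (∑ a : X, marg μ i a * ind (o.1 a)) := by
  unfold Mq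
  refine Finset.sum_congr rfl fun S _ => ?_
  congr 1
  refine Finset.sum_congr rfl fun o _ => ?_
  by_cases h : o.2 = t <;> simp [h]

include hμ hμ1 hfull hA in
lemma GM_bound (t : Fin T) (i : Fin n) :
    |Gq μ A t i - Mq μ A t i| ≤ ∑ S : Fin T → Fin n → X,
      PP μ S * pt A S t * tv (marg μ i) (condCoord μ i (S t)) := by
  rw [Gq_alt, Mq_alt]
  rw [← Finset.sum_sub_distrib]
  calc |∑ S : Fin T → Fin n → X, (PP μ S *
        ∑ o : (X → Bool) × Fin T, (if o.2 = t then A S o else 0) *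
          (∑ a : X, condCoord μ i (S t) a * ind (o.1 a)) -
        PP μ S * ∑ o : (X → Bool) × Fin T, (if o.2 = t then A S o else 0) *
          (∑ a : X, marg μ i a * ind (o.1 a)))|
      ≤ ∑ S : Fin T → Fin n → X, |PP μ S *
        ∑ o : (X → Bool) × Fin T, (if o.2 = t then A S o else 0) *
          ((∑ a : X, condCoord μ i (S t) a * ind (o.1 a)) -
           (∑ a : X, marg μ i a * ind (o.1 a)))| := by
        refine le_trans (le_of_eq ?_) (Finset.abs_sum_le_sum_abs _ _)
        congr 1
        refine Finset.sum_congr rfl fun S _ => ?_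
        rw [← mul_sub, ← Finset.sum_sub_distrib]
        congr 1
        refine Finset.sum_congr rfl fun o _ => by ring
    _ ≤ ∑ S : Fin T → Fin n → X,
        PP μ S * pt A S t * tv (marg μ i) (condCoord μ i (S t)) := by
        refine Finset.sum_le_sum fun S _ => ?_
        rw [abs_mul, abs_of_nonneg (PP_nonneg μ hμ S), mul_assoc]
        refine mul_le_mul_of_nonneg_left ?_ (PP_nonneg μ hμ S)
        calc |∑ o : (X → Bool) × Fin T, (if o.2 = t then A S o else 0) *
              ((∑ a : X, condCoord μ i (S t) a * ind (o.1 a)) -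
               (∑ a : X, marg μ i a * ind (o.1 a)))|
            ≤ ∑ o : (X → Bool) × Fin T, |(if o.2 = t then A S o else 0) *
              ((∑ a : X, condCoord μ i (S t) a * ind (o.1 a)) -
               (∑ a : X, marg μ i a * ind (o.1 a)))| := Finset.abs_sum_le_sum_abs _ _
          _ ≤ ∑ o : (X → Bool) × Fin T, (if o.2 = t then A S o else 0) *
              tv (marg μ i) (condCoord μ i (S t)) := by
              refine Finset.sum_le_sum fun o _ => ?_
              have hw : 0 ≤ (if o.2 = t then A S o else 0) := by
                split
                · exact (hA S).1 o
                · exact le_rfl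
              rw [abs_mul, abs_of_nonneg hw]
              refine mul_le_mul_of_nonneg_left ?_ hw
              exact tv_pair (marg μ i) (condCoord μ i (S t))
                (marg_sum_one μ hμ1 i) (cond_sum_one μ hfull i (S t))
                (fun a => ind (o.1 a)) (fun a => ind_nonneg _) (fun a => ind_le_one _)
          _ = pt A S t * tv (marg μ i) (condCoord μ i (S t)) := by
              rw [pt, Finset.sum_mul]

include hμ hμ1 hfull hA in
lemma psi_bound (ψ : ℝ)
    (hgibbs : ∀ x : Fin n → X,
      (1 / (n : ℝ)) * ∑ i : Fin n, tv (marg μ i) (condCoord μ i x) ≤ ψ) :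
    (1 / (n : ℝ)) * ∑ i : Fin n, ∑ t : Fin T, |Gq μ A t i - Mq μ A t i| ≤ ψ := by
  have hn' : (0:ℝ) ≤ 1 / (n:ℝ) := by positivity
  have stepA : ∑ i : Fin n, ∑ t : Fin T, |Gq μ A t i - Mq μ A t i|
      ≤ ∑ i : Fin n, ∑ t : Fin T, ∑ S : Fin T → Fin n → X,
        PP μ S * pt A S t * tv (marg μ i) (condCoord μ i (S t)) :=
    Finset.sum_le_sum fun i _ => Finset.sum_le_sum fun t _ =>
      GM_bound μ A hμ hμ1 hfull hA t i
  have swap : ∑ i : Fin n, ∑ t : Fin T, ∑ S : Fin T → Fin n → X,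
        PP μ S * pt A S t * tv (marg μ i) (condCoord μ i (S t))
      = ∑ S : Fin T → Fin n → X, ∑ t : Fin T, ∑ i : Fin n,
        PP μ S * pt A S t * tv (marg μ i) (condCoord μ i (S t)) := by
    calc ∑ i : Fin n, ∑ t : Fin T, ∑ S : Fin T → Fin n → X,
          PP μ S * pt A S t * tv (marg μ i) (condCoord μ i (S t))
        = ∑ t : Fin T, ∑ i : Fin n, ∑ S : Fin T → Fin n → X,
          PP μ S * pt A S t * tv (marg μ i) (condCoord μ i (S t)) := Finset.sum_comm
      _ = ∑ t : Fin T, ∑ S : Fin T → Fin n → X, ∑ i : Fin n,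
          PP μ S * pt A S t * tv (marg μ i) (condCoord μ i (S t)) :=
          Finset.sum_congr rfl fun t _ => Finset.sum_comm
      _ = _ := Finset.sum_comm
  calc (1 / (n : ℝ)) * ∑ i : Fin n, ∑ t : Fin T, |Gq μ A t i - Mq μ A t i|
      ≤ (1 / (n : ℝ)) * ∑ i : Fin n, ∑ t : Fin T, ∑ S : Fin T → Fin n → X,
          PP μ S * pt A S t * tv (marg μ i) (condCoord μ i (S t)) :=
        mul_le_mul_of_nonneg_left stepA hn'
    _ = ∑ S : Fin T → Fin n → X, ∑ t : Fin T, PP μ S * pt A S t *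
          ((1 / (n : ℝ)) * ∑ i : Fin n, tv (marg μ i) (condCoord μ i (S t))) := by
        rw [swap, Finset.mul_sum]
        refine Finset.sum_congr rfl fun S _ => ?_
        rw [Finset.mul_sum]
        refine Finset.sum_congr rfl fun t _ => ?_
        rw [show ∑ i : Fin n, PP μ S * pt A S t * tv (marg μ i) (condCoord μ i (S t))
            = PP μ S * pt A S t * ∑ i : Fin n, tv (marg μ i) (condCoord μ i (S t)) from
          (Finset.mul_sum _ _ _).symm]
        ring
    _ ≤ ∑ S : Fin T → Fin n → X, ∑ t : Fin T, PP μ S * pt A S t * ψ := by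
        refine Finset.sum_le_sum fun S _ => Finset.sum_le_sum fun t _ => ?_
        exact mul_le_mul_of_nonneg_left (hgibbs (S t))
          (mul_nonneg (PP_nonneg μ hμ S) (pt_nonneg A hA S t))
    _ = ψ := by
        have l : ∀ S : Fin T → Fin n → X, ∑ t : Fin T, PP μ S * pt A S t * ψ
            = PP μ S * ψ := by
          intro S
          calc ∑ t : Fin T, PP μ S * pt A S t * ψ
              = PP μ S * ψ * ∑ t : Fin T, pt A S t := by
                rw [Finset.mul_sum]
                exact Finset.sum_congr rfl fun t _ => by ring
            _ = PP μ S * ψ := by rw [pt_sum A hA S, mul_one]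
        rw [Finset.sum_congr rfl fun S _ => l S, ← Finset.sum_mul, PP_sum_one μ hμ1,
          one_mul]

lemma ind_def (b : Bool) : (if b then (1:ℝ) else 0) = ind b := rfl

lemma empMean_eq (S : Fin n → X) (h : X → Bool) :
    empMean S h = (1 / (n : ℝ)) * ∑ j : Fin n, ind (h (S j)) := rfl

lemma popMean_eq (h : X → Bool) :
    popMean μ h = (1 / (n : ℝ)) * ∑ j : Fin n, ∑ a : X, marg μ j a * ind (h a) := by
  unfold popMean
  have rhsj : ∀ j : Fin n, ∑ a : X, marg μ j a * ind (h a)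
      = ∑ S : Fin n → X, μ S * ind (h (S j)) := by
    intro j
    unfold marg
    calc ∑ a : X, (∑ x : Fin n → X, if x j = a then μ x else 0) * ind (h a)
        = ∑ a : X, ∑ x : Fin n → X, (if x j = a then μ x * ind (h a) else 0) := by
          refine Finset.sum_congr rfl fun a _ => ?_
          rw [Finset.sum_mul]
          refine Finset.sum_congr rfl fun x _ => ?_
          split <;> simp
      _ = ∑ x : Fin n → X, ∑ a : X, (if x j = a then μ x * ind (h a) else 0) :=
          Finset.sum_comm
      _ = ∑ x : Fin n → X, μ x * ind (h (x j)) := by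
          refine Finset.sum_congr rfl fun x _ => ?_
          rw [Finset.sum_ite_eq]
          simp
  rw [Finset.sum_congr rfl fun j (_ : j ∈ univ) => rhsj j]
  calc ∑ S : Fin n → X, μ S * empMean S h
      = ∑ S : Fin n → X, ∑ j : Fin n, (1 / (n : ℝ)) * (μ S * ind (h (S j))) := by
        refine Finset.sum_congr rfl fun S _ => ?_
        rw [empMean_eq, Finset.mul_sum, Finset.mul_sum]
        refine Finset.sum_congr rfl fun j _ => by ring
    _ = ∑ j : Fin n, ∑ S : Fin n → X, (1 / (n : ℝ)) * (μ S * ind (h (S j))) :=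
        Finset.sum_comm
    _ = (1 / (n : ℝ)) * ∑ j : Fin n, ∑ S : Fin n → X, μ S * ind (h (S j)) := by
        rw [Finset.mul_sum]
        refine Finset.sum_congr rfl fun j _ => ?_
        rw [Finset.mul_sum]

lemma split_by_t (f : ((X → Bool) × Fin T) → ℝ) :
    ∑ o : (X → Bool) × Fin T, f o
      = ∑ t : Fin T, ∑ o : (X → Bool) × Fin T, if o.2 = t then f o else 0 := by
  symm
  rw [Finset.sum_comm]
  refine Finset.sum_congr rfl fun o _ => ?_
  rw [Finset.sum_ite_eq]
  simp

lemma inner_ident (S : Fin T → Fin n → X) :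
    ∑ o : (X → Bool) × Fin T, A S o * (popMean μ o.1 - empMean (S o.2) o.1)
      = (1 / (n : ℝ)) * ∑ i : Fin n, ∑ t : Fin T,
          ((∑ o : (X → Bool) × Fin T,
              if o.2 = t then A S o * (∑ a : X, marg μ i a * ind (o.1 a)) else 0)
            - Fq A t S (S t i)) := by
  calc ∑ o : (X → Bool) × Fin T, A S o * (popMean μ o.1 - empMean (S o.2) o.1)
      = ∑ o : (X → Bool) × Fin T, (1 / (n : ℝ)) * ∑ i : Fin n,
          A S o * ((∑ a : X, marg μ i a * ind (o.1 a)) - ind (o.1 (S o.2 i))) := by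
        refine Finset.sum_congr rfl fun o _ => ?_
        rw [popMean_eq, empMean_eq, ← mul_sub, ← Finset.sum_sub_distrib, Finset.mul_sum,
          Finset.mul_sum, Finset.mul_sum]
        refine Finset.sum_congr rfl fun i _ => by ring
    _ = (1 / (n : ℝ)) * ∑ i : Fin n, ∑ o : (X → Bool) × Fin T,
          A S o * ((∑ a : X, marg μ i a * ind (o.1 a)) - ind (o.1 (S o.2 i))) := by
        rw [← Finset.mul_sum, Finset.sum_comm]
    _ = _ := by
        congr 1
        refine Finset.sum_congr rfl fun i _ => ?_
        rw [split_by_t]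
        refine Finset.sum_congr rfl fun t _ => ?_
        unfold Fq
        rw [← Finset.sum_sub_distrib]
        refine Finset.sum_congr rfl fun o _ => ?_
        by_cases h : o.2 = t
        · simp only [h, if_true]
          ring
        · simp [h]

include hμ1 in
lemma Q_ident :
    ∑ Svec : Fin T → Fin n → X, PP μ Svec *
        ∑ o : (X → Bool) × Fin T, A Svec o * (popMean μ o.1 - empMean (Svec o.2) o.1)
      = (1 / (n : ℝ)) * ∑ i : Fin n, ∑ t : Fin T, (Mq μ A t i - Hq μ A t i) := by
  calc ∑ Svec : Fin T → Fin n → X, PP μ Svec *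
        ∑ o : (X → Bool) × Fin T, A Svec o * (popMean μ o.1 - empMean (Svec o.2) o.1)
      = ∑ S : Fin T → Fin n → X, ∑ i : Fin n, ∑ t : Fin T, (1 / (n : ℝ)) *
          (PP μ S * ((∑ o : (X → Bool) × Fin T,
              if o.2 = t then A S o * (∑ a : X, marg μ i a * ind (o.1 a)) else 0)
            - Fq A t S (S t i))) := by
        refine Finset.sum_congr rfl fun S _ => ?_
        rw [inner_ident]
        simp only [Finset.mul_sum]
        refine Finset.sum_congr rfl fun i _ => Finset.sum_congr rfl fun t _ => by ring
    _ = ∑ i : Fin n, ∑ t : Fin T, ∑ S : Fin T → Fin n → X, (1 / (n : ℝ)) *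
          (PP μ S * ((∑ o : (X → Bool) × Fin T,
              if o.2 = t then A S o * (∑ a : X, marg μ i a * ind (o.1 a)) else 0)
            - Fq A t S (S t i))) := by
        calc ∑ S : Fin T → Fin n → X, ∑ i : Fin n, ∑ t : Fin T, (1 / (n : ℝ)) *
              (PP μ S * ((∑ o : (X → Bool) × Fin T,
                  if o.2 = t then A S o * (∑ a : X, marg μ i a * ind (o.1 a)) else 0)
                - Fq A t S (S t i)))
            = ∑ i : Fin n, ∑ S : Fin T → Fin n → X, ∑ t : Fin T, (1 / (n : ℝ)) *
              (PP μ S * ((∑ o : (X → Bool) × Fin T,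
                  if o.2 = t then A S o * (∑ a : X, marg μ i a * ind (o.1 a)) else 0)
                - Fq A t S (S t i))) := Finset.sum_comm
          _ = _ := Finset.sum_congr rfl fun i _ => Finset.sum_comm
    _ = (1 / (n : ℝ)) * ∑ i : Fin n, ∑ t : Fin T, (Mq μ A t i - Hq μ A t i) := by
        conv_rhs => rw [Finset.mul_sum]
        refine Finset.sum_congr rfl fun i _ => ?_
        conv_rhs => rw [Finset.mul_sum]
        refine Finset.sum_congr rfl fun t _ => ?_
        unfold Mq Hq
        conv_rhs => rw [← Finset.sum_sub_distrib, Finset.mul_sum]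
        refine Finset.sum_congr rfl fun S _ => by ring

end Quant

end Stmt17

open Stmt17

/-- Expectation bound for differentially private algorithms with correlated data:
if A' is (ε,δ)-DP (with respect to changing one element of one of the T samples) and μ
has Gibbs dependence ψ, then the expected generalization gap of the selected predicate
on the selected sample is at most e^ε + Tδ + ψ − 1. -/
theorem stmt_17 {X : Type*} [Fintype X] [DecidableEq X] (n T : ℕ) (hn : 0 < n) (hT : 0 < T)
    (ε δ ψ : ℝ) (hε : 0 ≤ ε) (hδ : 0 ≤ δ)
    (μ : (Fin n → X) → ℝ) (hμ : ∀ S, 0 ≤ μ S) (hμ1 : ∑ S : Fin n → X, μ S = 1)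
    (hfull : ∀ (x : Fin n → X) (i : Fin n), 0 < ∑ b : X, μ (Function.update x i b))
    (hgibbs : ∀ x : Fin n → X,
      (1 / (n : ℝ)) * ∑ i : Fin n, tv (marg μ i) (condCoord μ i x) ≤ ψ)
    (A : (Fin T → Fin n → X) → ((X → Bool) × Fin T) → ℝ)
    (hA : ∀ Svec, (∀ o, 0 ≤ A Svec o) ∧ ∑ o : (X → Bool) × Fin T, A Svec o = 1)
    (hDP : ∀ Svec Svec' : Fin T → Fin n → X,
      (∃ t i, ∀ t' i', (t', i') ≠ (t, i) → Svec t' i' = Svec' t' i') →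
      ∀ B : Finset ((X → Bool) × Fin T),
        ∑ o ∈ B, A Svec o ≤ Real.exp ε * ∑ o ∈ B, A Svec' o + δ) :
    |∑ Svec : Fin T → Fin n → X, (∏ t : Fin T, μ (Svec t)) *
        ∑ o : (X → Bool) × Fin T, A Svec o * (popMean μ o.1 - empMean (Svec o.2) o.1)|
      ≤ Real.exp ε + T * δ + ψ - 1 := by
  have h1 := Q_ident μ A hμ1
  simp only [PP] at h1
  rw [h1]
  have hn0 : (n : ℝ) ≠ 0 := Nat.cast_ne_zero.2 hn.ne'
  have hexp1 : (1 : ℝ) ≤ Real.exp ε := by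
    calc (1:ℝ) = Real.exp 0 := Real.exp_zero.symm
    _ ≤ Real.exp ε := Real.exp_le_exp.2 hε
  have hpsi := psi_bound μ A hμ hμ1 hfull hA ψ hgibbs
  set C : ℝ := Real.exp ε - 1 + T * δ with hC
  have hsumδ : ∑ _t : Fin T, δ = T * δ := by
    rw [Finset.sum_const, card_univ, Fintype.card_fin, nsmul_eq_mul]
  have hup : ∀ i : Fin n, ∑ t : Fin T, (Gq μ A t i - Hq μ A t i) ≤ C := by
    intro i
    rw [Finset.sum_sub_distrib]
    have h2 : ∑ t : Fin T, Gq μ A t i ≤ ∑ t : Fin T, (Real.exp ε * Hq μ A t i + δ) :=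
      Finset.sum_le_sum fun t _ => Gq_le_Hq μ A hμ hμ1 hfull ε δ hDP t i
    have h3 : ∑ t : Fin T, (Real.exp ε * Hq μ A t i + δ)
        = Real.exp ε * ∑ t : Fin T, Hq μ A t i + T * δ := by
      rw [Finset.sum_add_distrib, ← Finset.mul_sum, hsumδ]
    have h4 : ∑ t : Fin T, Hq μ A t i ≤ 1 := Hq_sum_t μ A hμ hμ1 hA i
    have h5 : 0 ≤ ∑ t : Fin T, Hq μ A t i :=
      Finset.sum_nonneg fun t _ => Hq_nonneg μ A hμ hA t i
    nlinarith [h2, h3, h4, h5, hexp1]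
  have hdn : ∀ i : Fin n, ∑ t : Fin T, (Hq μ A t i - Gq μ A t i) ≤ C := by
    intro i
    rw [Finset.sum_sub_distrib]
    have h2 : ∑ t : Fin T, Hq μ A t i ≤ ∑ t : Fin T, (Real.exp ε * Gq μ A t i + δ) :=
      Finset.sum_le_sum fun t _ => Hq_le_Gq μ A hμ hμ1 hfull ε δ hDP t i
    have h3 : ∑ t : Fin T, (Real.exp ε * Gq μ A t i + δ)
        = Real.exp ε * ∑ t : Fin T, Gq μ A t i + T * δ := by
      rw [Finset.sum_add_distrib, ← Finset.mul_sum, hsumδ]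
    have h4 : ∑ t : Fin T, Gq μ A t i ≤ 1 := Gq_sum_t μ A hμ hμ1 hfull hA i
    have h5 : 0 ≤ ∑ t : Fin T, Gq μ A t i :=
      Finset.sum_nonneg fun t _ => Gq_nonneg μ A hμ hA t i
    nlinarith [h2, h3, h4, h5, hexp1]
  have hsumC : ∀ (D : Fin T → Fin n → ℝ), (∀ i, ∑ t, D t i ≤ C) →
      ∑ i : Fin n, ∑ t : Fin T, D t i ≤ (n : ℝ) * C := by
    intro D hD
    calc ∑ i : Fin n, ∑ t : Fin T, D t i ≤ ∑ _i : Fin n, C :=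
        Finset.sum_le_sum fun i _ => hD i
      _ = (n : ℝ) * C := by
        rw [Finset.sum_const, card_univ, Fintype.card_fin, nsmul_eq_mul]
  have habs : ∀ s : ℝ → ℝ, True := fun _ => trivial
  have hup2 : (1 / (n : ℝ)) * ∑ i : Fin n, ∑ t : Fin T, (Mq μ A t i - Hq μ A t i)
      ≤ ψ + C := by
    have s1 : ∑ i : Fin n, ∑ t : Fin T, (Mq μ A t i - Hq μ A t i)
        ≤ ∑ i : Fin n, ∑ t : Fin T,
          (|Gq μ A t i - Mq μ A t i| + (Gq μ A t i - Hq μ A t i)) := by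
      refine Finset.sum_le_sum fun i _ => Finset.sum_le_sum fun t _ => ?_
      have := le_abs_self (Mq μ A t i - Gq μ A t i)
      rw [abs_sub_comm] at this
      linarith
    have s2 : ∑ i : Fin n, ∑ t : Fin T,
          (|Gq μ A t i - Mq μ A t i| + (Gq μ A t i - Hq μ A t i))
        = (∑ i : Fin n, ∑ t : Fin T, |Gq μ A t i - Mq μ A t i|)
          + ∑ i : Fin n, ∑ t : Fin T, (Gq μ A t i - Hq μ A t i) := by
      simp [Finset.sum_add_distrib]
    have s3 := hsumC _ hup
    have hnn : (0:ℝ) ≤ 1 / (n:ℝ) := by positivity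
    have s4 : (1 / (n : ℝ)) * ((n : ℝ) * C) = C := by field_simp
    calc (1 / (n : ℝ)) * ∑ i : Fin n, ∑ t : Fin T, (Mq μ A t i - Hq μ A t i)
        ≤ (1 / (n : ℝ)) * ((∑ i : Fin n, ∑ t : Fin T, |Gq μ A t i - Mq μ A t i|)
            + (n : ℝ) * C) := by
          apply mul_le_mul_of_nonneg_left _ hnn
          linarith [s1, s3, s2.le, s2.ge]
      _ = (1 / (n : ℝ)) * (∑ i : Fin n, ∑ t : Fin T, |Gq μ A t i - Mq μ A t i|)
            + (1 / (n : ℝ)) * ((n : ℝ) * C) := mul_add _ _ _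
      _ ≤ ψ + C := by rw [s4]; linarith [hpsi]
  have hdn2 : (1 / (n : ℝ)) * ∑ i : Fin n, ∑ t : Fin T, (Hq μ A t i - Mq μ A t i)
      ≤ ψ + C := by
    have s1 : ∑ i : Fin n, ∑ t : Fin T, (Hq μ A t i - Mq μ A t i)
        ≤ ∑ i : Fin n, ∑ t : Fin T,
          (|Gq μ A t i - Mq μ A t i| + (Hq μ A t i - Gq μ A t i)) := by
      refine Finset.sum_le_sum fun i _ => Finset.sum_le_sum fun t _ => ?_
      have := le_abs_self (Gq μ A t i - Mq μ A t i)
      linarith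
    have s2 : ∑ i : Fin n, ∑ t : Fin T,
          (|Gq μ A t i - Mq μ A t i| + (Hq μ A t i - Gq μ A t i))
        = (∑ i : Fin n, ∑ t : Fin T, |Gq μ A t i - Mq μ A t i|)
          + ∑ i : Fin n, ∑ t : Fin T, (Hq μ A t i - Gq μ A t i) := by
      simp [Finset.sum_add_distrib]
    have s3 := hsumC _ hdn
    have hnn : (0:ℝ) ≤ 1 / (n:ℝ) := by positivity
    have s4 : (1 / (n : ℝ)) * ((n : ℝ) * C) = C := by field_simp
    calc (1 / (n : ℝ)) * ∑ i : Fin n, ∑ t : Fin T, (Hq μ A t i - Mq μ A t i)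
        ≤ (1 / (n : ℝ)) * ((∑ i : Fin n, ∑ t : Fin T, |Gq μ A t i - Mq μ A t i|)
            + (n : ℝ) * C) := by
          apply mul_le_mul_of_nonneg_left _ hnn
          linarith [s1, s3, s2.ge, s2.le]
      _ = (1 / (n : ℝ)) * (∑ i : Fin n, ∑ t : Fin T, |Gq μ A t i - Mq μ A t i|)
            + (1 / (n : ℝ)) * ((n : ℝ) * C) := mul_add _ _ _
      _ ≤ ψ + C := by rw [s4]; linarith [hpsi]
  have hneg : ∑ i : Fin n, ∑ t : Fin T, (Hq μ A t i - Mq μ A t i)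
      = - ∑ i : Fin n, ∑ t : Fin T, (Mq μ A t i - Hq μ A t i) := by
    simp [Finset.sum_sub_distrib]
  rw [abs_le]
  constructor
  · rw [hneg] at hdn2
    have : -((1 / (n : ℝ)) * ∑ i : Fin n, ∑ t : Fin T, (Mq μ A t i - Hq μ A t i))
        ≤ ψ + C := by
      calc -((1 / (n : ℝ)) * ∑ i : Fin n, ∑ t : Fin T, (Mq μ A t i - Hq μ A t i))
          = (1 / (n : ℝ)) * -(∑ i : Fin n, ∑ t : Fin T, (Mq μ A t i - Hq μ A t i)) := by
            ring
        _ ≤ ψ + C := hdn2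
    rw [hC] at this
    linarith
  · rw [hC] at hup2
    linarith
end
end
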